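/- arXiv:math/0503544 — 7 statements merged into one kernel-verified Lean document; each statement's English description precedes it below -/
import Mathlib

section
/- Let r > 0, 0 < ε ≤ 1 and let A = {x ∈ ℝ² : r(1 − ε) ≤ ‖x‖_∞ ≤ r} be the square annulus defined by the l_∞-norm. Then ∫_{A×A} |(x + A) ∩ (y + A)| dx dy ≥ |A|³/24, where x + A = {x + a : a ∈ A} and |·| denotes Lebesgue measure on ℝ². -/
open MeasureTheory Set

/-- The "square" annulus defined by the `l∞`-norm (the norm on `ℝ × ℝ` is the sup norm). -/
def sqAnnulus (r ε : ℝ) : Set (ℝ × ℝ) :=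
  {x | r * (1 - ε) ≤ ‖x‖ ∧ ‖x‖ ≤ r}

namespace SqAnnulusAux

noncomputable def F (r ε : ℝ) : (ℝ × ℝ) × (ℝ × ℝ) → ℝ :=
  fun p => (volume (((p.1 + ·) '' sqAnnulus r ε) ∩ ((p.2 + ·) '' sqAnnulus r ε))).toReal

noncomputable def u1 (S o x1 y1 : ℝ) : ℝ := S - |x1 - y1 - o|

variable {r ε : ℝ}

lemma mem_sqAnnulus' {x : ℝ × ℝ} :
    x ∈ sqAnnulus r ε ↔ r * (1-ε) ≤ max |x.1| |x.2| ∧ max |x.1| |x.2| ≤ r := by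
  simp [sqAnnulus, Prod.norm_def, Real.norm_eq_abs]

lemma slab_subset {a₁ a₂ b₁ b₂ : ℝ}
    (h1 : -r ≤ a₁) (h2 : b₁ ≤ r) (h3 : -r ≤ a₂) (h4 : b₂ ≤ r)
    (hmaj : r*(1-ε) ≤ a₁ ∨ b₁ ≤ -(r*(1-ε)) ∨ r*(1-ε) ≤ a₂ ∨ b₂ ≤ -(r*(1-ε))) :
    Icc ((a₁,a₂) : ℝ×ℝ) (b₁,b₂) ⊆ sqAnnulus r ε := by
  rintro ⟨z1,z2⟩ hz
  rw [Set.mem_Icc, Prod.mk_le_mk, Prod.mk_le_mk] at hz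
  obtain ⟨⟨p1,p2⟩,p3,p4⟩ := hz
  rw [mem_sqAnnulus']
  constructor
  · rcases hmaj with h|h|h|h
    · exact le_trans (le_trans (by linarith) (le_abs_self z1)) (le_max_left _ _)
    · exact le_trans (le_trans (by linarith) (neg_le_abs z1)) (le_max_left _ _)
    · exact le_trans (le_trans (by linarith) (le_abs_self z2)) (le_max_right _ _)
    · exact le_trans (le_trans (by linarith) (neg_le_abs z2)) (le_max_right _ _)
  · exact max_le (abs_le.2 ⟨by linarith, by linarith⟩) (abs_le.2 ⟨by linarith, by linarith⟩)

lemma image_add_eq (x : ℝ×ℝ) (S : Set (ℝ×ℝ)) : (x + ·) '' S = {z | z - x ∈ S} := by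
  ext z
  constructor
  · rintro ⟨a, ha, rfl⟩; simpa [add_sub_cancel_left] using ha
  · intro h; exact ⟨z - x, h, by simp⟩

lemma overlap_len (u v S : ℝ) : min (u+S) (v+S) - max u v = S - |u - v| := by
  rcases le_total u v with h | h
  · rw [max_eq_right h, min_eq_left (by linarith), abs_of_nonpos (by linarith)]; ring
  · rw [max_eq_left h, min_eq_right (by linarith), abs_of_nonneg (by linarith)]; ring

lemma volume_Icc_prod (a b : ℝ×ℝ) :
    volume (Icc a b) = ENNReal.ofReal (b.1 - a.1) * ENNReal.ofReal (b.2 - a.2) := by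
  rw [Icc_prod_eq, MeasureTheory.Measure.volume_eq_prod, Measure.prod_prod,
    Real.volume_Icc, Real.volume_Icc]

lemma transl_subset (x : ℝ×ℝ) :
    (x + ·) '' sqAnnulus r ε ⊆ Icc (x + (-r,-r)) (x + (r,r)) := by
  rintro z ⟨a, ha, rfl⟩
  rw [mem_sqAnnulus'] at ha
  have h1 : |a.1| ≤ r := le_trans (le_max_left _ _) ha.2
  have h2 : |a.2| ≤ r := le_trans (le_max_right _ _) ha.2
  rw [abs_le] at h1 h2
  rw [Set.mem_Icc]
  constructor <;> rw [Prod.le_def] <;> constructor <;>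
    simp [Prod.fst_add, Prod.snd_add] <;> linarith [h1.1, h1.2, h2.1, h2.2]

lemma vol_inter_ne_top (x y : ℝ×ℝ) :
    volume (((x + ·) '' sqAnnulus r ε) ∩ ((y + ·) '' sqAnnulus r ε)) ≠ ⊤ := by
  refine ne_top_of_le_ne_top ?_ (measure_mono (inter_subset_left.trans (transl_subset x)))
  rw [volume_Icc_prod]
  exact ENNReal.mul_ne_top ENNReal.ofReal_ne_top ENNReal.ofReal_ne_top

lemma key (x y : ℝ × ℝ) (p₁ p₂ q₁ q₂ S₁ S₂ : ℝ)
    (hp : Icc ((p₁,p₂):ℝ×ℝ) (p₁+S₁, p₂+S₂) ⊆ sqAnnulus r ε)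
    (hq : Icc ((q₁,q₂):ℝ×ℝ) (q₁+S₁, q₂+S₂) ⊆ sqAnnulus r ε)
    (h1 : |x.1 + p₁ - (y.1 + q₁)| ≤ S₁) (h2 : |x.2 + p₂ - (y.2 + q₂)| ≤ S₂) :
    (S₁ - |x.1 + p₁ - (y.1 + q₁)|) * (S₂ - |x.2 + p₂ - (y.2 + q₂)|) ≤ F r ε (x, y) := by
  set m₁ := max (x.1+p₁) (y.1+q₁) with hm₁
  set m₂ := max (x.2+p₂) (y.2+q₂) with hm₂
  set M₁ := min (x.1+p₁+S₁) (y.1+q₁+S₁) with hM₁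
  set M₂ := min (x.2+p₂+S₂) (y.2+q₂+S₂) with hM₂
  have e1 : M₁ - m₁ = S₁ - |x.1 + p₁ - (y.1 + q₁)| := overlap_len _ _ _
  have e2 : M₂ - m₂ = S₂ - |x.2 + p₂ - (y.2 + q₂)| := overlap_len _ _ _
  have hsub : Icc ((m₁,m₂):ℝ×ℝ) (M₁,M₂) ⊆
      ((x + ·) '' sqAnnulus r ε) ∩ ((y + ·) '' sqAnnulus r ε) := by
    intro z hz
    rw [Set.mem_Icc, Prod.le_def, Prod.le_def] at hz
    obtain ⟨⟨hz1, hz2⟩, hz3, hz4⟩ := hz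
    simp only [hm₁, hm₂, hM₁, hM₂, le_min_iff, max_le_iff, min_le_iff] at *
    constructor
    · rw [image_add_eq]
      refine hp ?_
      rw [Set.mem_Icc, Prod.le_def, Prod.le_def]
      refine ⟨⟨?_, ?_⟩, ?_, ?_⟩ <;> simp only [Prod.fst_sub, Prod.snd_sub] <;>
        linarith [hz1.1, hz1.2, hz2.1, hz2.2, hz3.1, hz3.2, hz4.1, hz4.2]
    · rw [image_add_eq]
      refine hq ?_
      rw [Set.mem_Icc, Prod.le_def, Prod.le_def]
      refine ⟨⟨?_, ?_⟩, ?_, ?_⟩ <;> simp only [Prod.fst_sub, Prod.snd_sub] <;>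
        linarith [hz1.1, hz1.2, hz2.1, hz2.2, hz3.1, hz3.2, hz4.1, hz4.2]
  have hv : volume (Icc ((m₁,m₂):ℝ×ℝ) (M₁,M₂))
      = ENNReal.ofReal (M₁-m₁) * ENNReal.ofReal (M₂-m₂) := volume_Icc_prod _ _
  have hle := measure_mono (μ := (volume : Measure (ℝ×ℝ))) hsub
  rw [hv] at hle
  have h1' : 0 ≤ M₁ - m₁ := by rw [e1]; linarith
  have h2' : 0 ≤ M₂ - m₂ := by rw [e2]; linarith
  calc (S₁ - |x.1 + p₁ - (y.1 + q₁)|) * (S₂ - |x.2 + p₂ - (y.2 + q₂)|)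
      = (ENNReal.ofReal (M₁-m₁) * ENNReal.ofReal (M₂-m₂)).toReal := by
        rw [ENNReal.toReal_mul, ENNReal.toReal_ofReal h1', ENNReal.toReal_ofReal h2', e1, e2]
    _ ≤ _ := ENNReal.toReal_mono (vol_inter_ne_top x y) hle

lemma measurableSet_sqAnnulus : MeasurableSet (sqAnnulus r ε) := by
  have : sqAnnulus r ε = {x : ℝ×ℝ | r*(1-ε) ≤ ‖x‖} ∩ {x : ℝ×ℝ | ‖x‖ ≤ r} := rfl
  rw [this]
  exact ((isClosed_le continuous_const continuous_norm).inter
    (isClosed_le continuous_norm continuous_const)).measurableSet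

lemma measF : Measurable (F r ε) := by
  have hT : MeasurableSet {q : ((ℝ×ℝ)×(ℝ×ℝ)) × (ℝ×ℝ) |
      q.2 - q.1.1 ∈ sqAnnulus r ε ∧ q.2 - q.1.2 ∈ sqAnnulus r ε} := by
    refine MeasurableSet.inter ?_ ?_
    · exact measurableSet_sqAnnulus.preimage (measurable_snd.sub measurable_fst.fst)
    · exact measurableSet_sqAnnulus.preimage (measurable_snd.sub measurable_fst.snd)
  have h := (measurable_measure_prodMk_left (ν := (volume : Measure (ℝ×ℝ))) hT).ennreal_toReal
  unfold F
  convert h using 2 with p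
  rw [image_add_eq, image_add_eq]
  rfl

lemma F_nonneg (p : (ℝ×ℝ)×(ℝ×ℝ)) : 0 ≤ F r ε p := ENNReal.toReal_nonneg

lemma F_le (hr : 0 < r) (p : (ℝ×ℝ)×(ℝ×ℝ)) : F r ε p ≤ (2*r) * (2*r) := by
  have hle : volume (((p.1 + ·) '' sqAnnulus r ε) ∩ ((p.2 + ·) '' sqAnnulus r ε))
      ≤ ENNReal.ofReal (2*r) * ENNReal.ofReal (2*r) := by
    refine le_trans (measure_mono (inter_subset_left.trans (transl_subset p.1))) ?_
    rw [volume_Icc_prod]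
    have e1 : (p.1 + ((r:ℝ),(r:ℝ))).1 - (p.1 + (-r,-r)).1 = 2*r := by
      simp [Prod.fst_add]; ring
    have e2 : (p.1 + ((r:ℝ),(r:ℝ))).2 - (p.1 + (-r,-r)).2 = 2*r := by
      simp [Prod.snd_add]; ring
    rw [e1, e2]
  calc F r ε p ≤ (ENNReal.ofReal (2*r) * ENNReal.ofReal (2*r)).toReal :=
        ENNReal.toReal_mono (ENNReal.mul_ne_top ENNReal.ofReal_ne_top ENNReal.ofReal_ne_top) hle
    _ = (2*r) * (2*r) := by
        rw [ENNReal.toReal_mul, ENNReal.toReal_ofReal (by linarith)]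

lemma intFon (hr : 0 < r) {S : Set ((ℝ×ℝ)×(ℝ×ℝ))} (hvol : volume S ≠ ⊤) :
    IntegrableOn (F r ε) S volume := by
  refine Measure.integrableOn_of_bounded hvol measF.aestronglyMeasurable
    (M := (2*r)*(2*r)) (ae_of_all _ fun p => ?_)
  rw [Real.norm_eq_abs, abs_of_nonneg (F_nonneg p)]
  exact F_le hr p

lemma abs_integral (c T x : ℝ) (h1 : c ≤ x) (h2 : x ≤ c + T) :
    ∫ y in c..(c+T), |x - y| = ((x - c)^2 + (c + T - x)^2) / 2 := by
  have i1 : IntervalIntegrable (fun y => |x - y|) volume c x :=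
    ((continuous_const.sub continuous_id).abs).intervalIntegrable _ _
  have i2 : IntervalIntegrable (fun y => |x - y|) volume x (c+T) :=
    ((continuous_const.sub continuous_id).abs).intervalIntegrable _ _
  rw [← intervalIntegral.integral_add_adjacent_intervals i1 i2]
  have e1 : ∫ y in c..x, |x - y| = ∫ y in c..x, (x - y) := by
    refine intervalIntegral.integral_congr fun y hy => ?_
    rw [uIcc_of_le h1] at hy
    exact abs_of_nonneg (by linarith [hy.2])
  have e2 : ∫ y in x..(c+T), |x - y| = ∫ y in x..(c+T), (y - x) := by
    refine intervalIntegral.integral_congr fun y hy => ?_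
    rw [uIcc_of_le h2] at hy
    rw [abs_sub_comm]
    exact abs_of_nonneg (by linarith [hy.1])
  rw [e1, e2]
  rw [intervalIntegral.integral_sub intervalIntegrable_const
    (continuous_id'.intervalIntegrable _ _),
    intervalIntegral.integral_sub (continuous_id'.intervalIntegrable _ _)
    intervalIntegrable_const,
    intervalIntegral.integral_const, intervalIntegral.integral_const,
    integral_id, integral_id]
  simp only [smul_eq_mul]
  ring

lemma double_int (a c S T : ℝ) (hT : 0 ≤ T) :
    ∫ x in Ioc a (a+T), (∫ y in Ioc c (c+T), u1 S (a-c) x y) = S*T^2 - T^3/3 := by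
  unfold u1
  have hinner : ∀ x ∈ Ioc a (a+T),
      (∫ y in Ioc c (c+T), (S - |x - y - (a-c)|)) = S*T - ((x-a)^2 + (a+T-x)^2)/2 := by
    intro x hx
    rw [← intervalIntegral.integral_of_le (by linarith)]
    have hxy : ∀ y : ℝ, S - |x - y - (a - c)| = S - |(x - a + c) - y| := by
      intro y; rw [show x - y - (a-c) = (x - a + c) - y by ring]
    simp_rw [hxy]
    rw [intervalIntegral.integral_sub (f := fun _ => S) (g := fun y => |(x - a + c) - y|)
      intervalIntegrable_const
      ((continuous_const.sub continuous_id').abs.intervalIntegrable _ _),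
      abs_integral c T (x - a + c) (by simpa using hx.1.le) (by linarith [hx.2]),
      intervalIntegral.integral_const]
    simp only [smul_eq_mul]
    ring
  rw [setIntegral_congr_fun measurableSet_Ioc hinner,
    ← intervalIntegral.integral_of_le (by linarith : a ≤ a + T)]
  have i1 : IntervalIntegrable (fun x => ((x-a)^2 + (a+T-x)^2)/2) volume a (a+T) := by
    apply Continuous.intervalIntegrable; continuity
  rw [intervalIntegral.integral_sub intervalIntegrable_const i1,
    intervalIntegral.integral_const]
  have e1 : ∫ x in a..(a+T), ((x-a)^2 + (a+T-x)^2)/2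
      = ((∫ x in a..(a+T), (x-a)^2) + ∫ x in a..(a+T), (a+T-x)^2) / 2 := by
    rw [← intervalIntegral.integral_add
      ((by continuity : Continuous fun x : ℝ => (x-a)^2).intervalIntegrable _ _)
      ((by continuity : Continuous fun x : ℝ => (a+T-x)^2).intervalIntegrable _ _)]
    simp_rw [← intervalIntegral.integral_div]
  have e2 : ∫ x in a..(a+T), (x-a)^2 = T^3/3 := by
    rw [intervalIntegral.integral_comp_sub_right (fun x => x^2) a]
    simp [integral_pow]
    ring
  have e3 : ∫ x in a..(a+T), (a+T-x)^2 = T^3/3 := by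
    rw [intervalIntegral.integral_comp_sub_left (fun x => x^2) (a+T)]
    simp [integral_pow]
    ring
  rw [e1, e2, e3]
  simp only [smul_eq_mul]
  ring

lemma fubini_piece (S₁ S₂ T₁ T₂ a₁ a₂ c₁ c₂ : ℝ) (hT₁ : 0 ≤ T₁) (hT₂ : 0 ≤ T₂) :
    ∫ p in (Ioc a₁ (a₁+T₁) ×ˢ Ioc a₂ (a₂+T₂)) ×ˢ (Ioc c₁ (c₁+T₁) ×ˢ Ioc c₂ (c₂+T₂)),
      (u1 S₁ (a₁-c₁) p.1.1 p.2.1 * u1 S₂ (a₂-c₂) p.1.2 p.2.2)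
    = (S₁*T₁^2 - T₁^3/3) * (S₂*T₂^2 - T₂^3/3) := by
  have hgcont : Continuous fun p : (ℝ×ℝ)×(ℝ×ℝ) =>
      u1 S₁ (a₁-c₁) p.1.1 p.2.1 * u1 S₂ (a₂-c₂) p.1.2 p.2.2 := by
    unfold u1; fun_prop
  have hint : IntegrableOn (fun p : (ℝ×ℝ)×(ℝ×ℝ) =>
      u1 S₁ (a₁-c₁) p.1.1 p.2.1 * u1 S₂ (a₂-c₂) p.1.2 p.2.2)
      ((Ioc a₁ (a₁+T₁) ×ˢ Ioc a₂ (a₂+T₂)) ×ˢ (Ioc c₁ (c₁+T₁) ×ˢ Ioc c₂ (c₂+T₂))) volume := by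
    have hcpt : IsCompact ((Icc a₁ (a₁+T₁) ×ˢ Icc a₂ (a₂+T₂)) ×ˢ (Icc c₁ (c₁+T₁) ×ˢ Icc c₂ (c₂+T₂))) :=
      (isCompact_Icc.prod isCompact_Icc).prod (isCompact_Icc.prod isCompact_Icc)
    exact (hgcont.continuousOn.integrableOn_compact hcpt).mono_set
      (Set.prod_mono (Set.prod_mono Ioc_subset_Icc_self Ioc_subset_Icc_self)
        (Set.prod_mono Ioc_subset_Icc_self Ioc_subset_Icc_self))
  rw [MeasureTheory.Measure.volume_eq_prod] at hint ⊢
  rw [setIntegral_prod _ hint]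
  have hinner : ∀ x : ℝ×ℝ,
      (∫ y in Ioc c₁ (c₁+T₁) ×ˢ Ioc c₂ (c₂+T₂),
        u1 S₁ (a₁-c₁) x.1 y.1 * u1 S₂ (a₂-c₂) x.2 y.2)
      = (∫ y1 in Ioc c₁ (c₁+T₁), u1 S₁ (a₁-c₁) x.1 y1)
        * ∫ y2 in Ioc c₂ (c₂+T₂), u1 S₂ (a₂-c₂) x.2 y2 := by
    intro x
    rw [MeasureTheory.Measure.volume_eq_prod]
    exact setIntegral_prod_mul _ _ _ _
  simp_rw [hinner]
  have h2 := setIntegral_prod_mul (μ := (volume : Measure ℝ)) (ν := (volume : Measure ℝ))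
    (fun x1 => ∫ y1 in Ioc c₁ (c₁+T₁), u1 S₁ (a₁-c₁) x1 y1)
    (fun x2 => ∫ y2 in Ioc c₂ (c₂+T₂), u1 S₂ (a₂-c₂) x2 y2)
    (Ioc a₁ (a₁+T₁)) (Ioc a₂ (a₂+T₂))
  refine Eq.trans h2 ?_
  rw [double_int a₁ c₁ S₁ T₁ hT₁, double_int a₂ c₂ S₂ T₂ hT₂]

lemma piece (hr : 0 < r)
    (p₁ p₂ q₁ q₂ S₁ S₂ T₁ T₂ a₁ a₂ c₁ c₂ : ℝ)
    (hp : Icc ((p₁,p₂):ℝ×ℝ) (p₁+S₁, p₂+S₂) ⊆ sqAnnulus r ε)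
    (hq : Icc ((q₁,q₂):ℝ×ℝ) (q₁+S₁, q₂+S₂) ⊆ sqAnnulus r ε)
    (ho₁ : q₁ - p₁ = a₁ - c₁) (ho₂ : q₂ - p₂ = a₂ - c₂)
    (hT₁ : 0 ≤ T₁) (hT₂ : 0 ≤ T₂) (hTS₁ : T₁ ≤ S₁) (hTS₂ : T₂ ≤ S₂) :
    (S₁*T₁^2 - T₁^3/3) * (S₂*T₂^2 - T₂^3/3) ≤
      ∫ p in (Ioc a₁ (a₁+T₁) ×ˢ Ioc a₂ (a₂+T₂)) ×ˢ (Ioc c₁ (c₁+T₁) ×ˢ Ioc c₂ (c₂+T₂)),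
        F r ε p := by
  set D := (Ioc a₁ (a₁+T₁) ×ˢ Ioc a₂ (a₂+T₂)) ×ˢ (Ioc c₁ (c₁+T₁) ×ˢ Ioc c₂ (c₂+T₂)) with hD
  have hDmeas : MeasurableSet D :=
    (measurableSet_Ioc.prod measurableSet_Ioc).prod (measurableSet_Ioc.prod measurableSet_Ioc)
  have hDvol : volume D ≠ ⊤ := by
    have hcpt : IsCompact ((Icc a₁ (a₁+T₁) ×ˢ Icc a₂ (a₂+T₂)) ×ˢ (Icc c₁ (c₁+T₁) ×ˢ Icc c₂ (c₂+T₂))) :=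
      (isCompact_Icc.prod isCompact_Icc).prod (isCompact_Icc.prod isCompact_Icc)
    refine ne_top_of_le_ne_top hcpt.measure_lt_top.ne (measure_mono ?_)
    exact Set.prod_mono (Set.prod_mono Ioc_subset_Icc_self Ioc_subset_Icc_self)
      (Set.prod_mono Ioc_subset_Icc_self Ioc_subset_Icc_self)
  have hFi : IntegrableOn (F r ε) D volume := intFon hr hDvol
  have hgi : IntegrableOn (fun p : (ℝ×ℝ)×(ℝ×ℝ) =>
      u1 S₁ (a₁-c₁) p.1.1 p.2.1 * u1 S₂ (a₂-c₂) p.1.2 p.2.2) D volume := by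
    have hgcont : Continuous fun p : (ℝ×ℝ)×(ℝ×ℝ) =>
        u1 S₁ (a₁-c₁) p.1.1 p.2.1 * u1 S₂ (a₂-c₂) p.1.2 p.2.2 := by
      unfold u1; fun_prop
    have hcpt : IsCompact ((Icc a₁ (a₁+T₁) ×ˢ Icc a₂ (a₂+T₂)) ×ˢ (Icc c₁ (c₁+T₁) ×ˢ Icc c₂ (c₂+T₂))) :=
      (isCompact_Icc.prod isCompact_Icc).prod (isCompact_Icc.prod isCompact_Icc)
    exact (hgcont.continuousOn.integrableOn_compact hcpt).mono_set
      (Set.prod_mono (Set.prod_mono Ioc_subset_Icc_self Ioc_subset_Icc_self)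
        (Set.prod_mono Ioc_subset_Icc_self Ioc_subset_Icc_self))
  have hmono := setIntegral_mono_on hgi hFi hDmeas (fun p hpD => by
    rw [hD] at hpD
    obtain ⟨⟨h11, h12⟩, h21, h22⟩ := hpD
    have e1 : p.1.1 + p₁ - (p.2.1 + q₁) = p.1.1 - p.2.1 - (a₁ - c₁) := by
      rw [← ho₁]; ring
    have e2 : p.1.2 + p₂ - (p.2.2 + q₂) = p.1.2 - p.2.2 - (a₂ - c₂) := by
      rw [← ho₂]; ring
    have hb1 : |p.1.1 + p₁ - (p.2.1 + q₁)| ≤ S₁ := by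
      rw [e1]
      exact le_trans (abs_le.2 ⟨by linarith [h11.1, h21.2], by linarith [h11.2, h21.1]⟩) hTS₁
    have hb2 : |p.1.2 + p₂ - (p.2.2 + q₂)| ≤ S₂ := by
      rw [e2]
      exact le_trans (abs_le.2 ⟨by linarith [h12.1, h22.2], by linarith [h12.2, h22.1]⟩) hTS₂
    have := key p.1 p.2 p₁ p₂ q₁ q₂ S₁ S₂ hp hq hb1 hb2
    unfold u1
    rw [← e1, ← e2]
    simpa using this)
  calc (S₁*T₁^2 - T₁^3/3) * (S₂*T₂^2 - T₂^3/3)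
      = ∫ p in D, (u1 S₁ (a₁-c₁) p.1.1 p.2.1 * u1 S₂ (a₂-c₂) p.1.2 p.2.2) :=
        (fubini_piece S₁ S₂ T₁ T₂ a₁ a₂ c₁ c₂ hT₁ hT₂).symm
    _ ≤ _ := hmono

lemma dIoc {a b c d : ℝ} (h : b ≤ c) : Disjoint (Ioc a b) (Ioc c d) := by
  rw [Set.disjoint_left]
  rintro x ⟨_, h2⟩ ⟨h3, _⟩
  linarith

lemma dF {α β : Type*} {A C : Set α} {B D : Set β} (h : Disjoint A C) :
    Disjoint (A ×ˢ B) (C ×ˢ D) := by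
  rw [Set.disjoint_left] at h ⊢
  rintro ⟨x,y⟩ ⟨hx,_⟩ ⟨hx',_⟩
  exact h hx hx'

lemma dS {α β : Type*} {A C : Set α} {B D : Set β} (h : Disjoint B D) :
    Disjoint (A ×ˢ B) (C ×ˢ D) := by
  rw [Set.disjoint_left] at h ⊢
  rintro ⟨x,y⟩ ⟨_,hy⟩ ⟨_,hy'⟩
  exact h hy hy'

lemma add_le_int {S T : Set ((ℝ×ℝ)×(ℝ×ℝ))} {a b : ℝ} (hr : 0 < r)
    (hd : Disjoint S T) (hTm : MeasurableSet T)
    (hvol : volume (S ∪ T) ≠ ⊤)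
    (ha : a ≤ ∫ p in S, F r ε p) (hb : b ≤ ∫ p in T, F r ε p) :
    a + b ≤ ∫ p in S ∪ T, F r ε p := by
  have hi : IntegrableOn (F r ε) (S ∪ T) volume := intFon hr hvol
  rw [setIntegral_union hd hTm (hi.mono_set subset_union_left) (hi.mono_set subset_union_right)]
  exact add_le_add ha hb

lemma volA (hr : 0 < r) (hε0 : 0 < ε) (hε1 : ε ≤ 1) :
    (volume (sqAnnulus r ε)).toReal
      = (2*r)*(2*r) - (2*(r*(1-ε)))*(2*(r*(1-ε))) := by
  have hs0 : 0 ≤ r*(1-ε) := mul_nonneg hr.le (by linarith)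
  have hsr : r*(1-ε) ≤ r := by nlinarith
  have hAeq : sqAnnulus r ε = Metric.closedBall 0 r \ Metric.ball 0 (r*(1-ε)) := by
    ext x
    simp only [sqAnnulus, mem_setOf_eq, mem_diff, Metric.mem_closedBall, Metric.mem_ball,
      dist_zero_right, not_lt]
    tauto
  have hcb : volume (Metric.closedBall (0:ℝ×ℝ) r) = ENNReal.ofReal (2*r) * ENNReal.ofReal (2*r) := by
    rw [← Prod.mk_zero_zero, ← closedBall_prod_same, MeasureTheory.Measure.volume_eq_prod,
      Measure.prod_prod, Real.volume_closedBall]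
  have hb : volume (Metric.ball (0:ℝ×ℝ) (r*(1-ε)))
      = ENNReal.ofReal (2*(r*(1-ε))) * ENNReal.ofReal (2*(r*(1-ε))) := by
    rw [← Prod.mk_zero_zero, ← ball_prod_same, MeasureTheory.Measure.volume_eq_prod,
      Measure.prod_prod, Real.volume_ball]
  rw [hAeq, measure_diff (Metric.ball_subset_closedBall.trans (Metric.closedBall_subset_closedBall hsr))
    measurableSet_ball.nullMeasurableSet (by rw [hb]; exact ENNReal.mul_ne_top ENNReal.ofReal_ne_top ENNReal.ofReal_ne_top),
    hcb, hb, ← ENNReal.ofReal_mul (by linarith), ← ENNReal.ofReal_mul (by linarith),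
    ← ENNReal.ofReal_sub _ (by nlinarith), ENNReal.toReal_ofReal (by nlinarith)]

end SqAnnulusAux
-- appended after SqAnnulusAux
set_option maxHeartbeats 2000000 in
open SqAnnulusAux in
theorem integral_sqAnnulus_translate_inter_ge (r ε : ℝ) (hr : 0 < r)
    (hε0 : 0 < ε) (hε1 : ε ≤ 1) :
    (volume (sqAnnulus r ε)).toReal ^ 3 / 24 ≤
      ∫ p in (sqAnnulus r ε) ×ˢ (sqAnnulus r ε),
        (volume (((p.1 + ·) '' sqAnnulus r ε) ∩ ((p.2 + ·) '' sqAnnulus r ε))).toReal := by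
  have hFeq : (fun p : (ℝ×ℝ)×(ℝ×ℝ) =>
      (volume (((p.1 + ·) '' sqAnnulus r ε) ∩ ((p.2 + ·) '' sqAnnulus r ε))).toReal)
      = F r ε := rfl
  rw [show (∫ p in (sqAnnulus r ε) ×ˢ (sqAnnulus r ε),
      (volume (((p.1 + ·) '' sqAnnulus r ε) ∩ ((p.2 + ·) '' sqAnnulus r ε))).toReal)
      = ∫ p in (sqAnnulus r ε) ×ˢ (sqAnnulus r ε), F r ε p from by rw [← hFeq]]
  set s : ℝ := r * (1 - ε) with hsdef
  set t : ℝ := r * ε with htdef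
  have hst : s + t = r := by rw [hsdef, htdef]; ring
  have hs0 : 0 ≤ s := mul_nonneg hr.le (by linarith)
  have ht0 : 0 ≤ t := mul_nonneg hr.le hε0.le
  -- the four slabs of the annulus
  have hpR : Icc ((s,-r):ℝ×ℝ) (s+t, -r+2*r) ⊆ sqAnnulus r ε :=
    slab_subset (by linarith) (by linarith) (by linarith) (by linarith)
      (Or.inl (by linarith))
  have hpL : Icc ((-r,-r):ℝ×ℝ) (-r+t, -r+2*r) ⊆ sqAnnulus r ε :=
    slab_subset (by linarith) (by linarith) (by linarith) (by linarith)
      (Or.inr (Or.inl (by linarith)))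
  have hpT : Icc ((-r,s):ℝ×ℝ) (-r+2*r, s+t) ⊆ sqAnnulus r ε :=
    slab_subset (by linarith) (by linarith) (by linarith) (by linarith)
      (Or.inr (Or.inr (Or.inl (by linarith))))
  have hpB : Icc ((-r,-r):ℝ×ℝ) (-r+2*r, -r+t) ⊆ sqAnnulus r ε :=
    slab_subset (by linarith) (by linarith) (by linarith) (by linarith)
      (Or.inr (Or.inr (Or.inr (by linarith))))
  -- the four domain boxes
  set XR : Set (ℝ×ℝ) := Ioc s (s+t) ×ˢ Ioc (-r) (-r+2*r) with hXRdef
  set XL : Set (ℝ×ℝ) := Ioc (-r) (-r+t) ×ˢ Ioc (-r) (-r+2*r) with hXLdef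
  set XT : Set (ℝ×ℝ) := Ioc (-s) (-s+2*s) ×ˢ Ioc s (s+t) with hXTdef
  set XB : Set (ℝ×ℝ) := Ioc (-s) (-s+2*s) ×ˢ Ioc (-r) (-r+t) with hXBdef
  have hXRA : XR ⊆ sqAnnulus r ε := by
    rintro ⟨z1,z2⟩ ⟨hz1, hz2⟩
    exact hpR (by
      rw [Set.mem_Icc, Prod.mk_le_mk, Prod.mk_le_mk]
      exact ⟨⟨hz1.1.le, hz2.1.le⟩, hz1.2, hz2.2⟩)
  have hXLA : XL ⊆ sqAnnulus r ε := by
    rintro ⟨z1,z2⟩ ⟨hz1, hz2⟩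
    exact hpL (by
      rw [Set.mem_Icc, Prod.mk_le_mk, Prod.mk_le_mk]
      exact ⟨⟨hz1.1.le, hz2.1.le⟩, hz1.2, hz2.2⟩)
  have hXTA : XT ⊆ sqAnnulus r ε := by
    rintro ⟨z1,z2⟩ ⟨hz1, hz2⟩
    exact hpT (by
      rw [Set.mem_Icc, Prod.mk_le_mk, Prod.mk_le_mk]
      exact ⟨⟨by linarith [hz1.1], hz2.1.le⟩, by linarith [hz1.2], hz2.2⟩)
  have hXBA : XB ⊆ sqAnnulus r ε := by
    rintro ⟨z1,z2⟩ ⟨hz1, hz2⟩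
    exact hpB (by
      rw [Set.mem_Icc, Prod.mk_le_mk, Prod.mk_le_mk]
      exact ⟨⟨by linarith [hz1.1], hz2.1.le⟩, by linarith [hz1.2], hz2.2⟩)
  -- the eight pieces
  set P1 := XR ×ˢ XR with hP1def
  set P2 := XL ×ˢ XL with hP2def
  set P3 := XR ×ˢ XL with hP3def
  set P4 := XL ×ˢ XR with hP4def
  set P5 := XT ×ˢ XT with hP5def
  set P6 := XB ×ˢ XB with hP6def
  set P7 := XT ×ˢ XB with hP7def
  set P8 := XB ×ˢ XT with hP8def
  -- piece lower bounds
  have hP1 : (t*t^2 - t^3/3) * ((2*r)*(2*r)^2 - (2*r)^3/3) ≤ ∫ p in P1, F r ε p :=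
    piece hr s (-r) s (-r) t (2*r) t (2*r) s (-r) s (-r) hpR hpR
      (by ring) (by ring) ht0 (by linarith) le_rfl le_rfl
  have hP2 : (t*t^2 - t^3/3) * ((2*r)*(2*r)^2 - (2*r)^3/3) ≤ ∫ p in P2, F r ε p :=
    piece hr (-r) (-r) (-r) (-r) t (2*r) t (2*r) (-r) (-r) (-r) (-r) hpL hpL
      (by ring) (by ring) ht0 (by linarith) le_rfl le_rfl
  have hP3 : (t*t^2 - t^3/3) * ((2*r)*(2*r)^2 - (2*r)^3/3) ≤ ∫ p in P3, F r ε p :=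
    piece hr (-r) (-r) s (-r) t (2*r) t (2*r) s (-r) (-r) (-r) hpL hpR
      (by ring) (by ring) ht0 (by linarith) le_rfl le_rfl
  have hP4 : (t*t^2 - t^3/3) * ((2*r)*(2*r)^2 - (2*r)^3/3) ≤ ∫ p in P4, F r ε p :=
    piece hr s (-r) (-r) (-r) t (2*r) t (2*r) (-r) (-r) s (-r) hpR hpL
      (by ring) (by ring) ht0 (by linarith) le_rfl le_rfl
  have hP5 : ((2*r)*(2*s)^2 - (2*s)^3/3) * (t*t^2 - t^3/3) ≤ ∫ p in P5, F r ε p :=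
    piece hr (-r) s (-r) s (2*r) t (2*s) t (-s) s (-s) s hpT hpT
      (by ring) (by ring) (by linarith) ht0 (by linarith) le_rfl
  have hP6 : ((2*r)*(2*s)^2 - (2*s)^3/3) * (t*t^2 - t^3/3) ≤ ∫ p in P6, F r ε p :=
    piece hr (-r) (-r) (-r) (-r) (2*r) t (2*s) t (-s) (-r) (-s) (-r) hpB hpB
      (by ring) (by ring) (by linarith) ht0 (by linarith) le_rfl
  have hP7 : ((2*r)*(2*s)^2 - (2*s)^3/3) * (t*t^2 - t^3/3) ≤ ∫ p in P7, F r ε p :=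
    piece hr (-r) (-r) (-r) s (2*r) t (2*s) t (-s) s (-s) (-r) hpB hpT
      (by ring) (by ring) (by linarith) ht0 (by linarith) le_rfl
  have hP8 : ((2*r)*(2*s)^2 - (2*s)^3/3) * (t*t^2 - t^3/3) ≤ ∫ p in P8, F r ε p :=
    piece hr (-r) s (-r) (-r) (2*r) t (2*s) t (-s) (-r) (-s) s hpT hpB
      (by ring) (by ring) (by linarith) ht0 (by linarith) le_rfl
  -- disjointness
  have dRL : Disjoint XR XL := (dF (dIoc (by linarith : -r+t ≤ s))).symm
  have dRT : Disjoint XR XT := (dF (dIoc (by linarith : -s+2*s ≤ s))).symm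
  have dRB : Disjoint XR XB := (dF (dIoc (by linarith : -s+2*s ≤ s))).symm
  have dLT : Disjoint XL XT := dF (dIoc (by linarith : -r+t ≤ -s))
  have dLB : Disjoint XL XB := dF (dIoc (by linarith : -r+t ≤ -s))
  have dTB : Disjoint XT XB := (dS (dIoc (by linarith : -r+t ≤ s))).symm
  -- measurability
  have mXR : MeasurableSet XR := measurableSet_Ioc.prod measurableSet_Ioc
  have mXL : MeasurableSet XL := measurableSet_Ioc.prod measurableSet_Ioc
  have mXT : MeasurableSet XT := measurableSet_Ioc.prod measurableSet_Ioc
  have mXB : MeasurableSet XB := measurableSet_Ioc.prod measurableSet_Ioc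
  have mP1 : MeasurableSet P1 := mXR.prod mXR
  have mP2 : MeasurableSet P2 := mXL.prod mXL
  have mP3 : MeasurableSet P3 := mXR.prod mXL
  have mP4 : MeasurableSet P4 := mXL.prod mXR
  have mP5 : MeasurableSet P5 := mXT.prod mXT
  have mP6 : MeasurableSet P6 := mXB.prod mXB
  have mP7 : MeasurableSet P7 := mXT.prod mXB
  have mP8 : MeasurableSet P8 := mXB.prod mXT
  -- subsets of A ×ˢ A
  have sub1 : P1 ⊆ sqAnnulus r ε ×ˢ sqAnnulus r ε := Set.prod_mono hXRA hXRA
  have sub2 : P2 ⊆ sqAnnulus r ε ×ˢ sqAnnulus r ε := Set.prod_mono hXLA hXLA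
  have sub3 : P3 ⊆ sqAnnulus r ε ×ˢ sqAnnulus r ε := Set.prod_mono hXRA hXLA
  have sub4 : P4 ⊆ sqAnnulus r ε ×ˢ sqAnnulus r ε := Set.prod_mono hXLA hXRA
  have sub5 : P5 ⊆ sqAnnulus r ε ×ˢ sqAnnulus r ε := Set.prod_mono hXTA hXTA
  have sub6 : P6 ⊆ sqAnnulus r ε ×ˢ sqAnnulus r ε := Set.prod_mono hXBA hXBA
  have sub7 : P7 ⊆ sqAnnulus r ε ×ˢ sqAnnulus r ε := Set.prod_mono hXTA hXBA
  have sub8 : P8 ⊆ sqAnnulus r ε ×ˢ sqAnnulus r ε := Set.prod_mono hXBA hXTA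
  -- A is bounded
  have hAsub : sqAnnulus r ε ⊆ Icc ((-r,-r):ℝ×ℝ) (r,r) := by
    intro z hz
    rw [mem_sqAnnulus'] at hz
    have h1 := abs_le.1 (le_trans (le_max_left _ _) hz.2)
    have h2 := abs_le.1 (le_trans (le_max_right _ _) hz.2)
    rw [Set.mem_Icc, Prod.mk_le_mk, Prod.mk_le_mk]
    exact ⟨⟨h1.1, h2.1⟩, h1.2, h2.2⟩
  have hAA_vol : volume (sqAnnulus r ε ×ˢ sqAnnulus r ε) ≠ ⊤ := by
    refine ne_top_of_le_ne_top (((isCompact_Icc (a := ((-r,-r):ℝ×ℝ)) (b := (r,r))).prod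
      isCompact_Icc).measure_lt_top).ne (measure_mono (Set.prod_mono hAsub hAsub))
  have hIAA : IntegrableOn (F r ε) (sqAnnulus r ε ×ˢ sqAnnulus r ε) volume := intFon hr hAA_vol
  have vol_ne : ∀ {S : Set ((ℝ×ℝ)×(ℝ×ℝ))}, S ⊆ sqAnnulus r ε ×ˢ sqAnnulus r ε → volume S ≠ ⊤ :=
    fun h => ne_top_of_le_ne_top hAA_vol (measure_mono h)
  -- suffix unions
  set U7 := P7 ∪ P8 with hU7
  set U6 := P6 ∪ U7 with hU6
  set U5 := P5 ∪ U6 with hU5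
  set U4 := P4 ∪ U5 with hU4
  set U3 := P3 ∪ U4 with hU3
  set U2 := P2 ∪ U3 with hU2
  set U1 := P1 ∪ U2 with hU1
  have ssub7 : U7 ⊆ sqAnnulus r ε ×ˢ sqAnnulus r ε := union_subset sub7 sub8
  have ssub6 : U6 ⊆ sqAnnulus r ε ×ˢ sqAnnulus r ε := union_subset sub6 ssub7
  have ssub5 : U5 ⊆ sqAnnulus r ε ×ˢ sqAnnulus r ε := union_subset sub5 ssub6
  have ssub4 : U4 ⊆ sqAnnulus r ε ×ˢ sqAnnulus r ε := union_subset sub4 ssub5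
  have ssub3 : U3 ⊆ sqAnnulus r ε ×ˢ sqAnnulus r ε := union_subset sub3 ssub4
  have ssub2 : U2 ⊆ sqAnnulus r ε ×ˢ sqAnnulus r ε := union_subset sub2 ssub3
  have ssub1 : U1 ⊆ sqAnnulus r ε ×ˢ sqAnnulus r ε := union_subset sub1 ssub2
  have mU7 : MeasurableSet U7 := mP7.union mP8
  have mU6 : MeasurableSet U6 := mP6.union mU7
  have mU5 : MeasurableSet U5 := mP5.union mU6
  have mU4 : MeasurableSet U4 := mP4.union mU5
  have mU3 : MeasurableSet U3 := mP3.union mU4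
  have mU2 : MeasurableSet U2 := mP2.union mU3
  -- disjointness of pieces from suffix unions
  have d78 : Disjoint P7 P8 := dF dTB
  have d67 : Disjoint P6 U7 := Set.disjoint_union_right.mpr ⟨dF dTB.symm, dS dTB.symm⟩
  have d56 : Disjoint P5 U6 := Set.disjoint_union_right.mpr ⟨dF dTB,
    Set.disjoint_union_right.mpr ⟨dS dTB, dF dTB⟩⟩
  have d45 : Disjoint P4 U5 := Set.disjoint_union_right.mpr ⟨dF dLT,
    Set.disjoint_union_right.mpr ⟨dF dLB, Set.disjoint_union_right.mpr ⟨dF dLT, dF dLB⟩⟩⟩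
  have d34 : Disjoint P3 U4 := Set.disjoint_union_right.mpr ⟨dF dRL,
    Set.disjoint_union_right.mpr ⟨dF dRT, Set.disjoint_union_right.mpr ⟨dF dRB,
      Set.disjoint_union_right.mpr ⟨dF dRT, dF dRB⟩⟩⟩⟩
  have d23 : Disjoint P2 U3 := Set.disjoint_union_right.mpr ⟨dF dRL.symm,
    Set.disjoint_union_right.mpr ⟨dS dRL.symm, Set.disjoint_union_right.mpr ⟨dF dLT,
      Set.disjoint_union_right.mpr ⟨dF dLB, Set.disjoint_union_right.mpr ⟨dF dLT, dF dLB⟩⟩⟩⟩⟩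
  have d12 : Disjoint P1 U2 := Set.disjoint_union_right.mpr ⟨dF dRL,
    Set.disjoint_union_right.mpr ⟨dS dRL, Set.disjoint_union_right.mpr ⟨dF dRL,
      Set.disjoint_union_right.mpr ⟨dF dRT, Set.disjoint_union_right.mpr ⟨dF dRB,
        Set.disjoint_union_right.mpr ⟨dF dRT, dF dRB⟩⟩⟩⟩⟩⟩
  -- stack the integrals
  set V := (t*t^2 - t^3/3) * ((2*r)*(2*r)^2 - (2*r)^3/3) with hV
  set H := ((2*r)*(2*s)^2 - (2*s)^3/3) * (t*t^2 - t^3/3) with hH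
  have q7 : H + H ≤ ∫ p in U7, F r ε p := add_le_int hr d78 mP8 (vol_ne ssub7) hP7 hP8
  have q6 : H + (H + H) ≤ ∫ p in U6, F r ε p := add_le_int hr d67 mU7 (vol_ne ssub6) hP6 q7
  have q5 : H + (H + (H + H)) ≤ ∫ p in U5, F r ε p :=
    add_le_int hr d56 mU6 (vol_ne ssub5) hP5 q6
  have q4 : V + (H + (H + (H + H))) ≤ ∫ p in U4, F r ε p :=
    add_le_int hr d45 mU5 (vol_ne ssub4) hP4 q5
  have q3 : V + (V + (H + (H + (H + H)))) ≤ ∫ p in U3, F r ε p :=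
    add_le_int hr d34 mU4 (vol_ne ssub3) hP3 q4
  have q2 : V + (V + (V + (H + (H + (H + H))))) ≤ ∫ p in U2, F r ε p :=
    add_le_int hr d23 mU3 (vol_ne ssub2) hP2 q3
  have q1 : V + (V + (V + (V + (H + (H + (H + H)))))) ≤ ∫ p in U1, F r ε p :=
    add_le_int hr d12 mU2 (vol_ne ssub1) hP1 q2
  have hVA : (volume (sqAnnulus r ε)).toReal = (2*r)*(2*r) - (2*s)*(2*s) := by
    rw [volA hr hε0 hε1, hsdef]
  calc (volume (sqAnnulus r ε)).toReal ^ 3 / 24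
      ≤ V + (V + (V + (V + (H + (H + (H + H)))))) := by
        rw [hVA, hV, hH, hsdef, htdef]
        have h1 : 0 ≤ 11*(1-ε)^2 - 4*(1-ε) + 5 := by nlinarith [sq_nonneg (1-ε)]
        have h2 : 0 ≤ ε * (11*(1-ε)^2 - 4*(1-ε) + 5) := mul_nonneg hε0.le h1
        have h3 : (0:ℝ) < r^6 := by positivity
        have h4 : (0:ℝ) ≤ ε^3 := by positivity
        nlinarith [mul_nonneg (mul_nonneg h3.le h4) h2, mul_pos h3 (pow_pos hε0 3),
          sq_nonneg ε, sq_nonneg (1-ε)]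
    _ ≤ ∫ p in U1, F r ε p := q1
    _ ≤ ∫ p in (sqAnnulus r ε) ×ˢ (sqAnnulus r ε), F r ε p :=
        setIntegral_mono_set hIAA (ae_of_all _ fun p => F_nonneg p)
          (HasSubset.Subset.eventuallyLE ssub1)
end

section
/- Let X be a nonnegative real-valued random variable on a probability space (Ω, ℙ) with 𝔼[X] = 1 and 𝔼[(X − 1)²] < ∞. Then ℙ(X ≥ 1) · 𝔼[(X − 1)²] ≥ ℙ(X = 0)². Consequently, if in addition 𝔼[(X − 1)²] < 1/η for some η > 0, then ℙ(X ≥ 1) ≥ η · ℙ(X = 0)². -/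
open MeasureTheory ProbabilityTheory

theorem second_moment_lower_bound
    {Ω : Type*} [MeasureSpace Ω] [IsProbabilityMeasure (ℙ : Measure Ω)]
    (X : Ω → ℝ) (hXmeas : Measurable X) (hXnonneg : ∀ ω, 0 ≤ X ω)
    (hXint : Integrable X ℙ) (hXsq : Integrable (fun ω => (X ω - 1) ^ 2) ℙ)
    (hXmean : ∫ ω, X ω = 1) :
    (ℙ {ω | 1 ≤ X ω}).toReal * ∫ ω, (X ω - 1) ^ 2 ≥ (ℙ {ω | X ω = 0}).toReal ^ 2 ∧
      ∀ η : ℝ, 0 < η → (∫ ω, (X ω - 1) ^ 2) < 1 / η →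
        (ℙ {ω | 1 ≤ X ω}).toReal ≥ η * (ℙ {ω | X ω = 0}).toReal ^ 2 := by
  set f : Ω → ℝ := fun ω => X ω - 1 with hf_def
  set A : Set Ω := {ω | 1 ≤ X ω} with hA_def
  set B : Set Ω := {ω | X ω = 0} with hB_def
  have hA : MeasurableSet A := measurableSet_le measurable_const hXmeas
  have hB : MeasurableSet B := hXmeas (measurableSet_singleton 0)
  have hf_int : Integrable f ℙ := hXint.sub (integrable_const 1)
  have hf_zero : ∫ ω, f ω = 0 := by
    rw [hf_def, integral_sub hXint (integrable_const 1), hXmean]; simp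
  have hsplit : (∫ ω in A, f ω) + (∫ ω in Aᶜ, f ω) = 0 := by
    rw [integral_add_compl hA hf_int, hf_zero]
  have hAc_eq : (∫ ω in A, f ω) = ∫ ω in Aᶜ, (1 - X ω) := by
    have : (∫ ω in Aᶜ, (1 - X ω)) = - ∫ ω in Aᶜ, f ω := by
      rw [← integral_neg]
      congr 1 with ω
      simp [hf_def]
    linarith [this, hsplit]
  -- μ B ≤ ∫_A f
  have hBsub : B ⊆ Aᶜ := by
    intro ω hω
    simp only [hB_def, Set.mem_setOf_eq] at hω
    simp only [hA_def, Set.mem_compl_iff, Set.mem_setOf_eq, hω]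
    norm_num
  have hg_int : Integrable (fun ω => 1 - X ω) ℙ := (integrable_const 1).sub hXint
  have hB_int : (∫ ω in B, (1 - X ω)) = (ℙ B).toReal := by
    rw [setIntegral_congr_fun hB (g := fun _ => (1:ℝ))
      (fun ω hω => by simp [Set.mem_setOf_eq.mp hω])]
    simp [setIntegral_const]
    rfl
  have hmono : (∫ ω in B, (1 - X ω)) ≤ ∫ ω in Aᶜ, (1 - X ω) := by
    apply setIntegral_mono_set hg_int.integrableOn
    · rw [Filter.EventuallyLE, ae_restrict_iff' hA.compl]
      refine Filter.Eventually.of_forall fun ω hω => ?_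
      simp only [hA_def, Set.mem_compl_iff, Set.mem_setOf_eq, not_le] at hω
      simp [le_of_lt hω]
    · exact Filter.Eventually.of_forall hBsub
  have hkey : (ℙ B).toReal ≤ ∫ ω in A, f ω := by
    rw [hAc_eq]; linarith [hB_int ▸ hmono]
  -- Cauchy–Schwarz
  have hE_nonneg : 0 ≤ ∫ ω, f ω ^ 2 := integral_nonneg fun ω => sq_nonneg _
  have hP_nonneg : 0 ≤ (ℙ A).toReal := ENNReal.toReal_nonneg
  have h2 : (ENNReal.ofReal 2 : ENNReal) = 2 := by norm_num
  have hfmem : MemLp f 2 ℙ :=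
    (memLp_two_iff_integrable_sq hf_int.aestronglyMeasurable).2 hXsq
  have hind_mem : MemLp (A.indicator fun _ => (1:ℝ)) (ENNReal.ofReal 2) ℙ := by
    rw [h2]; exact memLp_indicator_const 2 hA 1 (Or.inr (measure_ne_top _ _))
  have habs_mem : MemLp (fun ω => |f ω|) (ENNReal.ofReal 2) ℙ := by
    rw [h2]; simpa [Real.norm_eq_abs] using hfmem.norm
  have hCS := integral_mul_le_Lp_mul_Lq_of_nonneg (μ := ℙ)
    (p := 2) (q := 2) ⟨by norm_num, by norm_num, by norm_num⟩
    (Filter.Eventually.of_forall fun a => Set.indicator_nonneg (fun _ _ => zero_le_one) a)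
    (Filter.Eventually.of_forall fun a => abs_nonneg (f a)) hind_mem habs_mem
  have hL : (∫ a, A.indicator (fun _ => (1:ℝ)) a * |f a|) = ∫ a in A, |f a| := by
    rw [← integral_indicator hA]
    congr 1 with a
    by_cases h : a ∈ A <;> simp [h]
  have hR1 : (∫ a, (A.indicator (fun _ => (1:ℝ)) a) ^ (2:ℝ)) = (ℙ A).toReal := by
    have heq : (fun a => (A.indicator (fun _ => (1:ℝ)) a) ^ (2:ℝ))
        = A.indicator (fun _ => (1:ℝ)) := by
      funext a; by_cases h : a ∈ A <;>
        simp [h, Real.zero_rpow (by norm_num : (2:ℝ) ≠ 0)]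
    rw [heq, integral_indicator hA]; simp
    rfl
  have hR2 : (∫ a, |f a| ^ (2:ℝ)) = ∫ ω, f ω ^ 2 := by
    congr 1 with a
    rw [show ((2:ℝ)) = ((2:ℕ):ℝ) by norm_num, Real.rpow_natCast, sq_abs]
  rw [hL, hR1, hR2] at hCS
  have habs_le : (∫ ω in A, f ω) ≤ ∫ a in A, |f a| :=
    integral_mono hf_int.integrableOn hf_int.abs.integrableOn fun a => le_abs_self _
  have hchain : (ℙ B).toReal ≤ (ℙ A).toReal ^ (1/2:ℝ) * (∫ ω, f ω ^ 2) ^ (1/2:ℝ) :=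
    le_trans hkey (le_trans habs_le hCS)
  have hsq : (ℙ B).toReal ^ 2 ≤ (ℙ A).toReal * ∫ ω, f ω ^ 2 := by
    calc (ℙ B).toReal ^ 2
        ≤ ((ℙ A).toReal ^ (1/2:ℝ) * (∫ ω, f ω ^ 2) ^ (1/2:ℝ)) ^ 2 :=
          pow_le_pow_left₀ ENNReal.toReal_nonneg hchain 2
      _ = (ℙ A).toReal * ∫ ω, f ω ^ 2 := by
          rw [mul_pow, ← Real.rpow_natCast ((ℙ A).toReal ^ (1/2:ℝ)) 2,
            ← Real.rpow_natCast ((∫ ω, f ω ^ 2) ^ (1/2:ℝ)) 2,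
            ← Real.rpow_mul hP_nonneg, ← Real.rpow_mul hE_nonneg]
          norm_num
  have hEeq : (∫ ω, (X ω - 1) ^ 2) = ∫ ω, f ω ^ 2 := rfl
  constructor
  · rw [hEeq]; exact hsq
  · intro η hη hEη
    rw [hEeq] at hEη
    have h1 : (ℙ B).toReal ^ 2 ≤ (ℙ A).toReal * (1/η) :=
      le_trans hsq (mul_le_mul_of_nonneg_left hEη.le hP_nonneg)
    have h2 : η * (ℙ B).toReal ^ 2 ≤ η * ((ℙ A).toReal * (1/η)) :=
      mul_le_mul_of_nonneg_left h1 hη.le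
    have h3 : η * ((ℙ A).toReal * (1/η)) = (ℙ A).toReal := by field_simp
    linarith
end

section
/- For every integer t ≥ 1, ℙ(N_t ≥ (1 + η)^t) ≥ η · ℙ(N_t = 0)² ≥ η · e^{−2(1+η)}. -/
open MeasureTheory ProbabilityTheory Real
open scoped NNReal ENNReal

lemma pois_hasSum1 (r : ℝ≥0) :
    HasSum (fun n : ℕ => (n : ℝ) * poissonPMFReal r n) r := by
  have h := (poissonPMFRealSum r).mul_left (r : ℝ)
  rw [mul_one] at h
  have he : (fun n : ℕ => ((n + 1 : ℕ) : ℝ) * poissonPMFReal r (n + 1))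
      = fun n : ℕ => (r : ℝ) * poissonPMFReal r n := by
    funext n
    unfold poissonPMFReal
    rw [Nat.factorial_succ]
    push_cast
    have h1 : ((n : ℝ) + 1) ≠ 0 := by positivity
    have h2 : (n.factorial : ℝ) ≠ 0 := by positivity
    field_simp
    ring
  refine (hasSum_nat_add_iff' 1).mp ?_
  have h0 : ∑ i ∈ Finset.range 1, (i : ℝ) * poissonPMFReal r i = 0 := by
    norm_num
  rw [h0, sub_zero, he]
  exact h

lemma pois_hasSum2 (r : ℝ≥0) :
    HasSum (fun n : ℕ => (n : ℝ) ^ 2 * poissonPMFReal r n) ((r : ℝ) + (r : ℝ) ^ 2) := by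
  have h := ((pois_hasSum1 r).mul_left (r : ℝ)).add ((poissonPMFRealSum r).mul_left (r : ℝ))
  rw [mul_one] at h
  have he : (fun n : ℕ => ((n + 1 : ℕ) : ℝ) ^ 2 * poissonPMFReal r (n + 1))
      = fun n : ℕ => (r : ℝ) * ((n : ℝ) * poissonPMFReal r n) + (r : ℝ) * poissonPMFReal r n := by
    funext n
    unfold poissonPMFReal
    rw [Nat.factorial_succ]
    push_cast
    have h1 : ((n : ℝ) + 1) ≠ 0 := by positivity
    have h2 : (n.factorial : ℝ) ≠ 0 := by positivity
    field_simp
    ring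
  refine (hasSum_nat_add_iff' 1).mp ?_
  have h0 : ∑ i ∈ Finset.range 1, (i : ℝ) ^ 2 * poissonPMFReal r i = 0 := by
    norm_num
  rw [h0, sub_zero, he]
  rw [show ((r : ℝ) + (r : ℝ) ^ 2) = r * r + r by ring]
  exact h

lemma pois_lint (r : ℝ≥0) (f : ℕ → ℝ) (hf : ∀ n, 0 ≤ f n) (s : ℝ)
    (h : HasSum (fun n => f n * poissonPMFReal r n) s) :
    ∫⁻ n, ENNReal.ofReal (f n) ∂(poissonMeasure r) = ENNReal.ofReal s := by
  rw [lintegral_countable']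
  have hm : ∀ n : ℕ, (poissonMeasure r) {n} = ENNReal.ofReal (poissonPMFReal r n) := by
    intro n
    rw [poissonMeasure_singleton]
    rfl
  calc ∑' n : ℕ, ENNReal.ofReal (f n) * (poissonMeasure r) {n}
      = ∑' n : ℕ, ENNReal.ofReal (f n * poissonPMFReal r n) := by
        congr 1; funext n
        rw [hm n, ← ENNReal.ofReal_mul (hf n)]
    _ = ENNReal.ofReal s := by
        rw [← ENNReal.ofReal_tsum_of_nonneg (fun n => mul_nonneg (hf n) poissonPMFReal_nonneg)
          h.summable, h.tsum_eq]

lemma lint_nat {Ω : Type*} [MeasurableSpace Ω] (μ : Measure Ω) {g : Ω → ℕ} (hg : Measurable g)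
    (f : ℕ → ℝ≥0∞) : ∫⁻ ω, f (g ω) ∂μ = ∑' n, f n * μ (g ⁻¹' {n}) := by
  rw [← lintegral_map (measurable_of_countable f) hg, lintegral_countable']
  congr 1; funext n; rw [Measure.map_apply hg (measurableSet_singleton n)]

lemma meas_comp_nat {Ω : Type*} (m : MeasurableSpace Ω) {F : ℕ → Ω → ℕ}
    (hF : ∀ k, Measurable[m] (F k)) {g : Ω → ℕ} (hg : Measurable[m] g) :
    Measurable[m] (fun ω => F (g ω) ω) := by
  apply measurable_to_countable'
  intro n
  have : (fun ω => F (g ω) ω) ⁻¹' {n} = ⋃ k, g ⁻¹' {k} ∩ F k ⁻¹' {n} := by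
    ext ω
    simp only [Set.mem_preimage, Set.mem_singleton_iff, Set.mem_iUnion, Set.mem_inter_iff]
    exact ⟨fun h => ⟨g ω, rfl, h⟩, fun ⟨k, hk, h⟩ => by rw [hk]; exact h⟩
  rw [this]
  exact MeasurableSet.iUnion fun k =>
    (hg (measurableSet_singleton k)).inter (hF k (measurableSet_singleton n))

lemma meas_sum' {Ω : Type*} (m : MeasurableSpace Ω) (f : ℕ → Ω → ℕ)
    (hf : ∀ i, Measurable[m] (f i)) (k : ℕ) :
    Measurable[m] (fun ω => ∑ i ∈ Finset.range k, f i ω) := by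
  induction k with
  | zero => simpa using @measurable_const ℕ Ω _ m 0
  | succ k ih =>
    simp only [Finset.sum_range_succ]
    exact Measurable.add ih (hf k)

set_option maxHeartbeats 2000000 in
lemma branching_moments {Ω : Type*} [MeasureSpace Ω] [IsProbabilityMeasure (ℙ : Measure Ω)]
    (η : ℝ) (hη : 0 < η) (Y : ℕ → ℕ → Ω → ℕ) (hYmeas : ∀ t i, Measurable (Y t i))
    (hYindep : iIndepFun (fun p : ℕ × ℕ => Y p.1 p.2) ℙ)
    (hYdist : ∀ t i, Measure.map (Y t i) ℙ = poissonMeasure (Real.toNNReal (1 + η)))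
    (N : ℕ → Ω → ℕ) (hN0 : ∀ ω, N 0 ω = 1)
    (hN : ∀ t ω, N (t + 1) ω = ∑ i ∈ Finset.range (N t ω), Y t i ω) :
    ∀ t, Measurable (N t) ∧
      (∫⁻ ω, (N t ω : ℝ≥0∞) ∂ℙ = (ENNReal.ofReal (1 + η)) ^ t) ∧
      (ENNReal.ofReal η * ∫⁻ ω, ((N t ω : ℝ≥0∞)) ^ 2 ∂ℙ + (ENNReal.ofReal (1 + η)) ^ t
        ≤ (ENNReal.ofReal η + 1) * (ENNReal.ofReal (1 + η)) ^ (2 * t)) := by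
  have h1η : (0:ℝ) ≤ 1 + η := by linarith
  set m : ℝ≥0∞ := ENNReal.ofReal (1 + η) with hm
  set r : ℝ≥0 := Real.toNNReal (1 + η) with hrdef
  have hr : (r : ℝ) = 1 + η := Real.coe_toNNReal _ h1η
  -- Y moments
  have hY1 : ∀ s i, ∫⁻ ω, (Y s i ω : ℝ≥0∞) ∂ℙ = m := by
    intro s i
    have hmap := lintegral_map (μ := (ℙ : Measure Ω)) (f := fun n : ℕ => (n : ℝ≥0∞))
      (measurable_of_countable _) (hYmeas s i)
    rw [← hmap, hYdist s i]
    have h := pois_lint r (fun n => (n : ℝ)) (fun n => n.cast_nonneg) (1 + η)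
      (by rw [← hr]; exact pois_hasSum1 r)
    simpa [ENNReal.ofReal_natCast] using h
  have hY2 : ∀ s i, ∫⁻ ω, ((Y s i ω : ℝ≥0∞)) ^ 2 ∂ℙ = m + m ^ 2 := by
    intro s i
    have hmap := lintegral_map (μ := (ℙ : Measure Ω)) (f := fun n : ℕ => ((n : ℝ≥0∞)) ^ 2)
      (measurable_of_countable _) (hYmeas s i)
    rw [← hmap, hYdist s i]
    have h := pois_lint r (fun n => (n : ℝ) ^ 2) (fun n => by positivity) ((1 + η) + (1 + η) ^ 2)
      (by rw [← hr]; exact pois_hasSum2 r)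
    have heq : ∀ n : ℕ, ENNReal.ofReal ((n : ℝ) ^ 2) = ((n : ℝ≥0∞)) ^ 2 := by
      intro n
      rw [ENNReal.ofReal_pow (Nat.cast_nonneg n), ENNReal.ofReal_natCast]
    simp only [heq] at h
    rw [h, ENNReal.ofReal_add h1η (by positivity), ENNReal.ofReal_pow h1η]
  -- S definition
  set S : ℕ → ℕ → Ω → ℕ := fun s k ω => ∑ i ∈ Finset.range k, Y s i ω with hSdef
  have hSmeas : ∀ s k, Measurable (S s k) := fun s k => meas_sum' _ _ (fun i => hYmeas s i) k
  have hNmeas : ∀ t, Measurable (N t) := by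
    intro t; induction t with
    | zero =>
      have h0 : N 0 = fun _ => 1 := funext hN0
      rw [h0]; exact measurable_const
    | succ t ih =>
      have h1 : N (t + 1) = fun ω => S t (N t ω) ω := funext (hN t)
      rw [h1]; exact meas_comp_nat _ (fun k => hSmeas t k) ih
  -- sigma algebras
  set G : Set (ℕ × ℕ) → MeasurableSpace Ω :=
    fun I => ⨆ p ∈ I, MeasurableSpace.comap (Y p.1 p.2) inferInstance with hGdef
  have hii : iIndep (fun p : ℕ × ℕ => MeasurableSpace.comap (Y p.1 p.2) inferInstance) ℙ :=
    hYindep.iIndep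
  have hGindep : ∀ I J : Set (ℕ × ℕ), Disjoint I J → Indep (G I) (G J) ℙ := fun I J hIJ =>
    @indep_iSup_of_disjoint Ω (ℕ × ℕ) (fun p => MeasurableSpace.comap (Y p.1 p.2) inferInstance)
      _ ℙ (fun p => (hYmeas p.1 p.2).comap_le) hii I J hIJ
  have hYG : ∀ (I : Set (ℕ × ℕ)) (p : ℕ × ℕ), p ∈ I → Measurable[G I] (Y p.1 p.2) := by
    intro I p hp
    have hle : MeasurableSpace.comap (Y p.1 p.2) inferInstance
        ≤ ⨆ q ∈ I, MeasurableSpace.comap (Y q.1 q.2) (inferInstance : MeasurableSpace ℕ) :=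
      le_iSup₂ (f := fun (q : ℕ × ℕ) (_ : q ∈ I) =>
        MeasurableSpace.comap (Y q.1 q.2) (inferInstance : MeasurableSpace ℕ)) p hp
    exact measurable_iff_comap_le.2 hle
  have hSG : ∀ s k, Measurable[G {p : ℕ × ℕ | p.1 = s}] (S s k) :=
    fun s k => meas_sum' _ _ (fun i => hYG {p : ℕ × ℕ | p.1 = s} (s, i) rfl) k
  have hGmono : ∀ I J : Set (ℕ × ℕ), I ⊆ J → G I ≤ G J := fun I J h => biSup_mono h
  have hNG : ∀ t, Measurable[G {p : ℕ × ℕ | p.1 < t}] (N t) := by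
    intro t; induction t with
    | zero =>
      have h0 : N 0 = fun _ => 1 := funext hN0
      rw [h0]; exact measurable_const
    | succ t ih =>
      have h1 : N (t + 1) = fun ω => S t (N t ω) ω := funext (hN t)
      rw [h1]
      refine meas_comp_nat _ (fun k => (hSG t k).mono (hGmono _ _ ?_) le_rfl)
        (ih.mono (hGmono _ _ ?_) le_rfl)
      · intro p hp; simp only [Set.mem_setOf_eq] at hp ⊢; omega
      · intro p hp; simp only [Set.mem_setOf_eq] at hp ⊢; omega
  have hfact : ∀ t k n, ℙ (N t ⁻¹' {k} ∩ S t k ⁻¹' {n})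
      = ℙ (N t ⁻¹' {k}) * ℙ (S t k ⁻¹' {n}) := by
    intro t k n
    have hdisj : Disjoint {p : ℕ × ℕ | p.1 < t} {p : ℕ × ℕ | p.1 = t} := by
      rw [Set.disjoint_left]; intro p hp hp2
      simp only [Set.mem_setOf_eq] at hp hp2; omega
    exact (Indep_iff _ _ _).1 (hGindep _ _ hdisj) _ _
      (hNG t (measurableSet_singleton k)) (hSG t k (measurableSet_singleton n))
  -- decomposition
  have key : ∀ (t : ℕ) (f : ℕ → ℝ≥0∞), ∫⁻ ω, f (N (t + 1) ω) ∂ℙ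
      = ∑' k, ℙ (N t ⁻¹' {k}) * ∫⁻ ω, f (S t k ω) ∂ℙ := by
    intro t f
    rw [lint_nat ℙ (hNmeas (t + 1)) f]
    have hpart : ∀ n : ℕ, ℙ (N (t + 1) ⁻¹' {n})
        = ∑' k, ℙ (N t ⁻¹' {k}) * ℙ (S t k ⁻¹' {n}) := by
      intro n
      have hU : N (t + 1) ⁻¹' {n} = ⋃ k, (N t ⁻¹' {k} ∩ S t k ⁻¹' {n}) := by
        ext ω
        simp only [Set.mem_preimage, Set.mem_singleton_iff, Set.mem_iUnion, Set.mem_inter_iff]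
        constructor
        · intro h
          refine ⟨N t ω, rfl, ?_⟩
          simp only [hSdef]
          rw [← hN t ω]; exact h
        · rintro ⟨k, hk, h⟩
          simp only [hSdef] at h
          rw [hN t ω, hk]; exact h
      rw [hU, measure_iUnion ?_ ?_]
      · exact tsum_congr fun k => hfact t k n
      · intro i j hij
        refine Set.disjoint_left.2 fun ω hωi hωj => hij ?_
        rw [← hωi.1, ← hωj.1]
      · exact fun k => ((hNmeas t) (measurableSet_singleton k)).inter
          ((hSmeas t k) (measurableSet_singleton n))
    calc ∑' n, f n * ℙ (N (t + 1) ⁻¹' {n})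
        = ∑' (n : ℕ) (k : ℕ), ℙ (N t ⁻¹' {k}) * (f n * ℙ (S t k ⁻¹' {n})) := by
          refine tsum_congr fun n => ?_
          rw [hpart n, ← ENNReal.tsum_mul_left]
          exact tsum_congr fun k => by ring
      _ = ∑' (k : ℕ), ℙ (N t ⁻¹' {k}) * ∑' (n : ℕ), f n * ℙ (S t k ⁻¹' {n}) := by
          rw [ENNReal.tsum_comm]
          exact tsum_congr fun k => ENNReal.tsum_mul_left
      _ = ∑' k, ℙ (N t ⁻¹' {k}) * ∫⁻ ω, f (S t k ω) ∂ℙ :=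
          tsum_congr fun k => by rw [lint_nat ℙ (hSmeas t k) f]
  -- S moments
  have hYcast : ∀ s i, Measurable (fun ω => (Y s i ω : ℝ≥0∞)) :=
    fun s i => (measurable_of_countable _).comp (hYmeas s i)
  have hcastS : ∀ s k ω, ((S s k ω : ℝ≥0∞)) = ∑ i ∈ Finset.range k, (Y s i ω : ℝ≥0∞) := by
    intro s k ω; rw [hSdef]; push_cast; rfl
  have hS1 : ∀ s k, ∫⁻ ω, (S s k ω : ℝ≥0∞) ∂ℙ = k * m := by
    intro s k
    simp only [hcastS]
    rw [lintegral_finset_sum _ (fun i _ => hYcast s i)]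
    simp [hY1 s, Finset.sum_const, Finset.card_range, nsmul_eq_mul]
  have hS2 : ∀ s k, ∫⁻ ω, ((S s k ω : ℝ≥0∞)) ^ 2 ∂ℙ = k * m + (k : ℝ≥0∞) ^ 2 * m ^ 2 := by
    intro s k
    have hexp : ∀ ω, ((S s k ω : ℝ≥0∞)) ^ 2
        = ∑ i ∈ Finset.range k, ∑ j ∈ Finset.range k, (Y s i ω : ℝ≥0∞) * (Y s j ω : ℝ≥0∞) := by
      intro ω; rw [sq, hcastS, Finset.sum_mul_sum]
    simp only [hexp]
    rw [lintegral_finset_sum _ (fun i _ => Finset.measurable_sum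
      (f := fun j ω => (Y s i ω : ℝ≥0∞) * (Y s j ω : ℝ≥0∞)) _
      (fun j _ => (hYcast s i).mul (hYcast s j)))]
    have hswap : ∀ i ∈ Finset.range k, ∫⁻ ω, ∑ j ∈ Finset.range k,
        (Y s i ω : ℝ≥0∞) * (Y s j ω : ℝ≥0∞) ∂ℙ
        = ∑ j ∈ Finset.range k, ∫⁻ ω, (Y s i ω : ℝ≥0∞) * (Y s j ω : ℝ≥0∞) ∂ℙ :=
      fun i _ => lintegral_finset_sum _ (fun j _ => (hYcast s i).mul (hYcast s j))
    rw [Finset.sum_congr rfl hswap]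
    have hpair : ∀ i j : ℕ, ∫⁻ ω, (Y s i ω : ℝ≥0∞) * (Y s j ω : ℝ≥0∞) ∂ℙ
        = m * m + (if i = j then m else 0) := by
      intro i j
      by_cases hij : i = j
      · subst hij
        simp only [if_pos rfl]
        have : ∀ ω, (Y s i ω : ℝ≥0∞) * (Y s i ω : ℝ≥0∞) = ((Y s i ω : ℝ≥0∞)) ^ 2 := by
          intro ω; rw [sq]
        simp only [this]
        rw [hY2 s i]; simp only [if_true]; ring
      · simp only [if_neg hij, add_zero]
        have hind : IndepFun (fun ω => (Y s i ω : ℝ≥0∞)) (fun ω => (Y s j ω : ℝ≥0∞)) ℙ :=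
          (hYindep.indepFun (show ((s, i) : ℕ × ℕ) ≠ (s, j) by simp [hij])).comp
            (measurable_of_countable _) (measurable_of_countable _)
        have hmul := lintegral_mul_eq_lintegral_mul_lintegral_of_indepFun
          (hYcast s i) (hYcast s j) hind
        simp only [Pi.mul_apply] at hmul
        rw [hmul, hY1, hY1]
    rw [Finset.sum_congr rfl (fun i _ => Finset.sum_congr rfl (fun j _ => hpair i j))]
    have hinner : ∀ i ∈ Finset.range k, ∑ j ∈ Finset.range k, (m * m + (if i = j then m else 0))
        = k * (m * m) + m := by
      intro i hi
      rw [Finset.sum_add_distrib, Finset.sum_const, Finset.card_range, nsmul_eq_mul,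
        Finset.sum_ite_eq _ i (fun _ => m), if_pos hi]
    rw [Finset.sum_congr rfl hinner, Finset.sum_const, Finset.card_range, nsmul_eq_mul]
    ring
  -- first moment recursion
  have he : ∀ t, ∫⁻ ω, (N t ω : ℝ≥0∞) ∂ℙ = m ^ t := by
    intro t; induction t with
    | zero => simp [hN0]
    | succ t ih =>
      have h := key t (fun n => (n : ℝ≥0∞))
      rw [h]
      simp only [hS1 t]
      calc ∑' k : ℕ, ℙ (N t ⁻¹' {k}) * (k * m)
          = m * ∑' k : ℕ, (k : ℝ≥0∞) * ℙ (N t ⁻¹' {k}) := by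
            rw [← ENNReal.tsum_mul_left]
            exact tsum_congr fun k => by ring
        _ = m * ∫⁻ ω, (N t ω : ℝ≥0∞) ∂ℙ := by
            rw [← lint_nat ℙ (hNmeas t) (fun n => (n : ℝ≥0∞))]
        _ = m ^ (t + 1) := by rw [ih]; ring
  -- second moment bound
  have hv : ∀ t, ENNReal.ofReal η * ∫⁻ ω, ((N t ω : ℝ≥0∞)) ^ 2 ∂ℙ + m ^ t
      ≤ (ENNReal.ofReal η + 1) * m ^ (2 * t) := by
    have hm1 : ENNReal.ofReal η + 1 = m := by
      rw [hm, show (1 : ℝ) + η = η + 1 by ring, ENNReal.ofReal_add hη.le zero_le_one,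
        ENNReal.ofReal_one]
    intro t; induction t with
    | zero => simp [hN0]
    | succ t ih =>
      have hv' : ∫⁻ ω, ((N (t + 1) ω : ℝ≥0∞)) ^ 2 ∂ℙ
          = m * m ^ t + m ^ 2 * ∫⁻ ω, ((N t ω : ℝ≥0∞)) ^ 2 ∂ℙ := by
        rw [key t (fun n => ((n : ℝ≥0∞)) ^ 2)]
        simp only [hS2 t]
        calc ∑' k : ℕ, ℙ (N t ⁻¹' {k}) * (k * m + (k : ℝ≥0∞) ^ 2 * m ^ 2)
            = ∑' k : ℕ, (m * ((k : ℝ≥0∞) * ℙ (N t ⁻¹' {k}))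
              + m ^ 2 * ((k : ℝ≥0∞) ^ 2 * ℙ (N t ⁻¹' {k}))) := tsum_congr fun k => by ring
          _ = m * ∑' k : ℕ, (k : ℝ≥0∞) * ℙ (N t ⁻¹' {k})
              + m ^ 2 * ∑' k : ℕ, ((k : ℝ≥0∞)) ^ 2 * ℙ (N t ⁻¹' {k}) := by
              rw [ENNReal.tsum_add, ENNReal.tsum_mul_left, ENNReal.tsum_mul_left]
          _ = m * m ^ t + m ^ 2 * ∫⁻ ω, ((N t ω : ℝ≥0∞)) ^ 2 ∂ℙ := by
              rw [← lint_nat ℙ (hNmeas t) (fun n => (n : ℝ≥0∞)),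
                ← lint_nat ℙ (hNmeas t) (fun n => ((n : ℝ≥0∞)) ^ 2), he t]
      calc ENNReal.ofReal η * ∫⁻ ω, ((N (t + 1) ω : ℝ≥0∞)) ^ 2 ∂ℙ + m ^ (t + 1)
          = m ^ 2 * (ENNReal.ofReal η * ∫⁻ ω, ((N t ω : ℝ≥0∞)) ^ 2 ∂ℙ + m ^ t) := by
            rw [hv', ← hm1]; ring
        _ ≤ m ^ 2 * ((ENNReal.ofReal η + 1) * m ^ (2 * t)) := mul_le_mul_right ih _
        _ = (ENNReal.ofReal η + 1) * m ^ (2 * (t + 1)) := by ring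
  exact fun t => ⟨hNmeas t, he t, hv t⟩

theorem branching_process_survival_lower_bound
    {Ω : Type*} [MeasureSpace Ω] [IsProbabilityMeasure (ℙ : Measure Ω)]
    (η : ℝ) (hη : 0 < η)
    (Y : ℕ → ℕ → Ω → ℕ)
    (hYmeas : ∀ t i, Measurable (Y t i))
    (hYindep : iIndepFun
      (fun p : ℕ × ℕ => Y p.1 p.2) ℙ)
    (hYdist : ∀ t i, Measure.map (Y t i) ℙ = poissonMeasure (Real.toNNReal (1 + η)))
    (N : ℕ → Ω → ℕ)
    (hN0 : ∀ ω, N 0 ω = 1)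
    (hN : ∀ t ω, N (t + 1) ω = ∑ i ∈ Finset.range (N t ω), Y t i ω)
    (t : ℕ) (ht : 1 ≤ t) :
    (ℙ {ω | (1 + η) ^ t ≤ (N t ω : ℝ)}).toReal ≥ η * (ℙ {ω | N t ω = 0}).toReal ^ 2 ∧
      η * (ℙ {ω | N t ω = 0}).toReal ^ 2 ≥ η * Real.exp (-2 * (1 + η)) := by
  have h1η : (0:ℝ) ≤ 1 + η := by linarith
  have hr : ((Real.toNNReal (1 + η)) : ℝ) = 1 + η := Real.coe_toNNReal _ h1η
  -- extinction propagation (independent of t-specific objects)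
  have hzero : ∀ (s : ℕ) (ω : Ω), Y 0 0 ω = 0 → N (s + 1) ω = 0 := by
    intro s ω hω
    induction s with
    | zero => rw [hN 0 ω, hN0 ω, Finset.sum_range_one, hω]
    | succ s ih => rw [hN (s + 1) ω, ih, Finset.range_zero, Finset.sum_empty]
  obtain ⟨hNmeas, hE1, hC⟩ := branching_moments η hη Y hYmeas hYindep hYdist N hN0 hN t
  set m : ℝ≥0∞ := ENNReal.ofReal (1 + η) with hm
  set M : ℝ := (1 + η) ^ t with hMdef
  have hM1 : (1:ℝ) < M := one_lt_pow₀ (by linarith) (by omega)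
  have hM0 : (0:ℝ) < M := by linarith
  have hmne : m ≠ ⊤ := ENNReal.ofReal_ne_top
  have hXmeas : Measurable (fun ω => (N t ω : ℝ)) :=
    (measurable_of_countable _).comp hNmeas
  have hXnonneg : ∀ ω, (0:ℝ) ≤ (N t ω : ℝ) := fun ω => Nat.cast_nonneg _
  have hor1 : ∀ ω : Ω, ENNReal.ofReal ((N t ω : ℝ)) = ((N t ω : ℕ) : ℝ≥0∞) := fun ω =>
    ENNReal.ofReal_natCast _
  have hor2 : ∀ ω : Ω, ENNReal.ofReal ((N t ω : ℝ) ^ 2) = ((N t ω : ℕ) : ℝ≥0∞) ^ 2 := fun ω => by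
    rw [ENNReal.ofReal_pow (hXnonneg ω), ENNReal.ofReal_natCast]
  have hRHSne : (ENNReal.ofReal η + 1) * m ^ (2 * t) ≠ ⊤ :=
    ENNReal.mul_ne_top (by simp) (ENNReal.pow_ne_top hmne)
  have hv_ne : ∫⁻ ω, ((N t ω : ℝ≥0∞)) ^ 2 ∂ℙ ≠ ⊤ := by
    intro hvtop
    rw [hvtop, ENNReal.mul_top (by simp [ENNReal.ofReal_eq_zero]; linarith)] at hC
    exact hRHSne (eq_top_iff.2 (le_trans le_top (by rw [← top_add (m ^ t)]; exact hC)))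
  have he_ne : ∫⁻ ω, ((N t ω : ℝ≥0∞)) ∂ℙ ≠ ⊤ := by rw [hE1]; exact ENNReal.pow_ne_top hmne
  -- integrability
  have hIX2 : Integrable (fun ω => (N t ω : ℝ) ^ 2) ℙ := by
    refine ⟨(hXmeas.pow_const 2).aestronglyMeasurable, ?_⟩
    rw [hasFiniteIntegral_iff_ofReal (Filter.Eventually.of_forall fun ω => by positivity)]
    simp only [hor2]
    exact hv_ne.lt_top
  have hIX : Integrable (fun ω => (N t ω : ℝ)) ℙ := by
    refine ⟨hXmeas.aestronglyMeasurable, ?_⟩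
    rw [hasFiniteIntegral_iff_ofReal (Filter.Eventually.of_forall fun ω => hXnonneg ω)]
    simp only [hor1]
    exact he_ne.lt_top
  -- real moments
  have hh1 : (m ^ t).toReal = M := by
    rw [ENNReal.toReal_pow, hm, ENNReal.toReal_ofReal h1η]
  have hh2 : (m ^ (2 * t)).toReal = M ^ 2 := by
    rw [ENNReal.toReal_pow, hm, ENNReal.toReal_ofReal h1η, hMdef, mul_comm 2 t, pow_mul]
  have hEX : ∫ ω, (N t ω : ℝ) ∂ℙ = M := by
    rw [integral_eq_lintegral_of_nonneg_ae (Filter.Eventually.of_forall hXnonneg)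
      hXmeas.aestronglyMeasurable]
    simp only [hor1]
    rw [hE1, hh1]
  have hEX2 : η * ∫ ω, (N t ω : ℝ) ^ 2 ∂ℙ + M ≤ (η + 1) * M ^ 2 := by
    have h2 : ∫ ω, (N t ω : ℝ) ^ 2 ∂ℙ = (∫⁻ ω, ((N t ω : ℝ≥0∞)) ^ 2 ∂ℙ).toReal := by
      rw [integral_eq_lintegral_of_nonneg_ae (Filter.Eventually.of_forall fun ω => by positivity)
        (hXmeas.pow_const 2).aestronglyMeasurable]
      simp only [hor2]
    have hmono := ENNReal.toReal_mono hRHSne hC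
    rw [ENNReal.toReal_add (ENNReal.mul_ne_top ENNReal.ofReal_ne_top hv_ne)
      (ENNReal.pow_ne_top hmne), ENNReal.toReal_mul, ENNReal.toReal_mul,
      ENNReal.toReal_add ENNReal.ofReal_ne_top ENNReal.one_ne_top,
      ENNReal.toReal_ofReal hη.le, ENNReal.toReal_one, hh1, hh2] at hmono
    rw [h2]
    linarith
  -- sets
  set A : Set Ω := {ω | M ≤ (N t ω : ℝ)} with hAdef
  have hAmeas : MeasurableSet A := measurableSet_le measurable_const hXmeas
  set B : Set Ω := {ω | N t ω = 0} with hBdef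
  have hBmeas : MeasurableSet B := hNmeas (measurableSet_singleton 0)
  set p : ℝ := (ℙ A).toReal with hpdef
  set q : ℝ := (ℙ B).toReal with hqdef
  have hp0 : 0 ≤ p := ENNReal.toReal_nonneg
  have hq0 : 0 ≤ q := ENNReal.toReal_nonneg
  have hIXM : Integrable (fun ω => (N t ω : ℝ) - M) ℙ := hIX.sub (integrable_const M)
  have hexpand : (fun ω => ((N t ω : ℝ) - M) ^ 2)
      = fun ω => ((N t ω : ℝ) ^ 2 - 2 * M * (N t ω : ℝ)) + M ^ 2 :=
    funext fun ω => by ring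
  have hIW : Integrable (fun ω => ((N t ω : ℝ) - M) ^ 2) ℙ := by
    rw [hexpand]
    exact (hIX2.sub (hIX.const_mul (2 * M))).add (integrable_const _)
  set w : ℝ := ∫ ω, ((N t ω : ℝ) - M) ^ 2 ∂ℙ with hwdef
  have hw0 : 0 ≤ w := integral_nonneg fun ω => sq_nonneg _
  have hEW : η * w ≤ M ^ 2 - M := by
    have hint1 : Integrable (fun ω => (N t ω : ℝ) ^ 2 - 2 * M * (N t ω : ℝ)) ℙ :=
      hIX2.sub (hIX.const_mul (2 * M))
    have hcalc : w = (∫ ω, (N t ω : ℝ) ^ 2 ∂ℙ) - M ^ 2 := by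
      rw [hwdef, hexpand, integral_add hint1 (integrable_const _),
        integral_sub hIX2 (hIX.const_mul (2 * M)), integral_const_mul, hEX, integral_const,
        probReal_univ]
      simp
      ring
    rw [hcalc]
    nlinarith [hEX2]
  -- step i : M*q ≤ ∫_A (X - M)
  have hBA : B ⊆ Aᶜ := by
    intro ω hω
    simp only [hBdef, Set.mem_setOf_eq] at hω
    simp only [hAdef, Set.mem_compl_iff, Set.mem_setOf_eq, hω, Nat.cast_zero, not_le]
    exact hM0
  have hintA : ∫ ω in A, ((N t ω : ℝ) - M) ∂ℙ = ∫ ω in Aᶜ, (M - (N t ω : ℝ)) ∂ℙ := by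
    have h0 : ∫ ω, ((N t ω : ℝ) - M) ∂ℙ = 0 := by
      rw [integral_sub hIX (integrable_const M), hEX, integral_const, probReal_univ]
      simp
    have hsplit := integral_add_compl hAmeas hIXM
    have hneg : ∫ ω in Aᶜ, (M - (N t ω : ℝ)) ∂ℙ = - ∫ ω in Aᶜ, ((N t ω : ℝ) - M) ∂ℙ := by
      rw [← integral_neg]
      congr 1
      funext ω
      ring
    rw [h0] at hsplit
    linarith [hsplit, hneg]
  have hstep1 : M * q ≤ ∫ ω in A, ((N t ω : ℝ) - M) ∂ℙ := by
    rw [hintA]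
    have h1 : ∫ ω in B, (M - (N t ω : ℝ)) ∂ℙ = M * q := by
      rw [setIntegral_congr_fun hBmeas (g := fun _ => M) (fun ω hω => by
        simp only [hBdef, Set.mem_setOf_eq] at hω
        simp [hω]), setIntegral_const]
      rw [hqdef, smul_eq_mul, measureReal_def]
      ring
    rw [← h1]
    have hIMX : Integrable (fun ω => M - (N t ω : ℝ)) ℙ := (integrable_const M).sub hIX
    refine setIntegral_mono_set hIMX.integrableOn ?_ ?_
    · refine (ae_restrict_iff' hAmeas.compl).2 (Filter.Eventually.of_forall fun ω hω => ?_)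
      simp only [hAdef, Set.mem_compl_iff, Set.mem_setOf_eq, not_le] at hω
      show (0:ℝ) ≤ M - (N t ω : ℝ)
      linarith
    · exact HasSubset.Subset.eventuallyLE hBA
  -- step ii
  have hstep2 : ∀ c : ℝ, 0 < c → M * q ≤ w / (2 * c) + c / 2 * p := by
    intro c hc
    have h2 : ∫ ω in A, ((N t ω : ℝ) - M) ∂ℙ
        ≤ ∫ ω in A, (((N t ω : ℝ) - M) ^ 2 / (2 * c) + c / 2) ∂ℙ :=
      setIntegral_mono_on hIXM.integrableOn
        ((hIW.div_const (2 * c)).add (integrable_const _)).integrableOn hAmeas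
        (fun ω _ => by
          rw [← sub_nonneg]
          have hexp2 : ((N t ω : ℝ) - M) ^ 2 / (2 * c) + c / 2 - ((N t ω : ℝ) - M)
              = ((N t ω : ℝ) - M - c) ^ 2 / (2 * c) := by
            field_simp
            ring
          rw [hexp2]
          exact div_nonneg (sq_nonneg _) (by linarith))
    have h3 : ∫ ω in A, (((N t ω : ℝ) - M) ^ 2 / (2 * c) + c / 2) ∂ℙ
        = (∫ ω in A, ((N t ω : ℝ) - M) ^ 2 ∂ℙ) / (2 * c) + c / 2 * p := by
      rw [integral_add ((hIW.div_const (2 * c)).integrableOn) (integrableOn_const (measure_ne_top _ _)),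
        integral_div, setIntegral_const, hpdef, smul_eq_mul, measureReal_def]
      ring
    have h4 : ∫ ω in A, ((N t ω : ℝ) - M) ^ 2 ∂ℙ ≤ w :=
      setIntegral_le_integral hIW (Filter.Eventually.of_forall fun ω => sq_nonneg _)
    have h5 : (∫ ω in A, ((N t ω : ℝ) - M) ^ 2 ∂ℙ) / (2 * c) ≤ w / (2 * c) :=
      div_le_div_of_nonneg_right h4 (by linarith)
    calc M * q ≤ ∫ ω in A, ((N t ω : ℝ) - M) ∂ℙ := hstep1
      _ ≤ ∫ ω in A, (((N t ω : ℝ) - M) ^ 2 / (2 * c) + c / 2) ∂ℙ := h2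
      _ = (∫ ω in A, ((N t ω : ℝ) - M) ^ 2 ∂ℙ) / (2 * c) + c / 2 * p := h3
      _ ≤ w / (2 * c) + c / 2 * p := add_le_add_left h5 _
  -- step iii : (M q)^2 ≤ w p
  have hkey : (M * q) ^ 2 ≤ w * p := by
    by_contra hcon
    push_neg at hcon
    have hMq0 : 0 ≤ M * q := mul_nonneg hM0.le hq0
    have hwp0 : 0 ≤ w * p := mul_nonneg hw0 hp0
    have ha0 : 0 < M * q := by
      rcases hMq0.lt_or_eq with h | h
      · exact h
      · exfalso
        rw [← h] at hcon
        simp only [ne_eq, OfNat.ofNat_ne_zero, not_false_eq_true, zero_pow] at hcon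
        exact absurd hcon (not_lt.2 hwp0)
    rcases hp0.lt_or_eq with hp | hp
    · have hc : 0 < M * q / p := div_pos ha0 hp
      have h1 := hstep2 (M * q / p) hc
      have h2 : w / (2 * (M * q / p)) = w * p / (2 * (M * q)) := by
        rw [div_eq_div_iff (by linarith) (by linarith)]
        field_simp
      have h3 : (M * q / p) / 2 * p = M * q / 2 := by
        field_simp
      rw [h2, h3] at h1
      have h4 : M * q / 2 ≤ w * p / (2 * (M * q)) := by linarith
      rw [div_le_div_iff₀ (by norm_num) (by linarith)] at h4
      nlinarith [h4, hcon, ha0]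
    · have hD : (0:ℝ) < w / (M * q) + 1 :=
        add_pos_of_nonneg_of_pos (div_nonneg hw0 ha0.le) one_pos
      have h1 := hstep2 (w / (M * q) + 1) hD
      rw [← hp] at h1
      have h2 : M * q ≤ w / (2 * (w / (M * q) + 1)) := by linarith
      have h3 := (le_div_iff₀ (by linarith : (0:ℝ) < 2 * (w / (M * q) + 1))).1 h2
      have h4 : M * q * (2 * (w / (M * q) + 1)) = 2 * w + 2 * (M * q) := by
        have hx : M * q * (w / (M * q)) = w := mul_div_cancel₀ w ha0.ne'
        linear_combination 2 * hx
      rw [h4] at h3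
      linarith
  -- conclusion part 1
  have hpart1 : p ≥ η * q ^ 2 := by
    have hMM : η * w ≤ M ^ 2 := by linarith
    have h1 : η * (M * q) ^ 2 ≤ η * (w * p) := mul_le_mul_of_nonneg_left hkey hη.le
    have h2 : η * (w * p) ≤ M ^ 2 * p := by
      rw [← mul_assoc]
      exact mul_le_mul_of_nonneg_right hMM hp0
    have h3 : M ^ 2 * (η * q ^ 2) ≤ M ^ 2 * p := by
      have e : M ^ 2 * (η * q ^ 2) = η * (M * q) ^ 2 := by ring
      rw [e]
      exact h1.trans h2
    have hM2 : 0 < M ^ 2 := by positivity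
    exact le_of_mul_le_mul_left h3 hM2
  -- part 2
  have hsub : {ω | Y 0 0 ω = 0} ⊆ B := by
    intro ω hω
    simp only [Set.mem_setOf_eq] at hω
    simp only [hBdef, Set.mem_setOf_eq]
    obtain ⟨s, rfl⟩ : ∃ s, t = s + 1 := ⟨t - 1, by omega⟩
    exact hzero s ω hω
  have hmap0 : ℙ {ω | Y 0 0 ω = 0} = ENNReal.ofReal (Real.exp (-(1 + η))) := by
    have hpre : {ω | Y 0 0 ω = 0} = Y 0 0 ⁻¹' {0} := rfl
    rw [hpre, ← Measure.map_apply (hYmeas 0 0) (measurableSet_singleton 0), hYdist 0 0,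
      poissonMeasure_singleton]
    show ENNReal.ofReal (poissonPMFReal _ 0) = _
    rw [show poissonPMFReal (Real.toNNReal (1 + η)) 0 = Real.exp (-(1 + η)) from by
      unfold poissonPMFReal
      rw [hr]
      norm_num]
  have hqexp : Real.exp (-(1 + η)) ≤ q := by
    have hle : ℙ {ω | Y 0 0 ω = 0} ≤ ℙ B := measure_mono hsub
    have hmono := ENNReal.toReal_mono (measure_ne_top ℙ B) hle
    rw [hmap0, ENNReal.toReal_ofReal (Real.exp_pos _).le] at hmono
    exact hmono
  have he2 : Real.exp (-(1 + η)) ^ 2 = Real.exp (-2 * (1 + η)) := by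
    rw [sq, ← Real.exp_add]
    congr 1
    ring
  constructor
  · exact hpart1
  · rw [← he2]
    have hs : Real.exp (-(1 + η)) ^ 2 ≤ q ^ 2 :=
      pow_le_pow_left₀ (Real.exp_pos _).le hqexp 2
    exact mul_le_mul_of_nonneg_left hs hη.le
end

section
/- Let λ > 0 satisfy (1 − e^{−λ})(1 + η) = λ. Then for every T ∈ ℕ, the truncated branching process satisfies ℙ(N_T = 0) ≤ e^{−λ} + T·e^{−λK}. -/
open MeasureTheory ProbabilityTheory
open scoped NNReal ENNReal

lemma my_poisson_integrable (μ : ℝ≥0) {r : ℝ} (h0 : 0 ≤ r) (h1 : r ≤ 1) :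
    Integrable (fun n : ℕ => r ^ n) (poissonMeasure μ) := by
  refine ⟨(measurable_of_countable _).aestronglyMeasurable, ?_⟩
  refine HasFiniteIntegral.of_bounded (C := 1) (Filter.Eventually.of_forall fun n => ?_)
  rw [Real.norm_eq_abs, abs_of_nonneg (pow_nonneg h0 n)]
  exact pow_le_one₀ h0 h1

lemma my_poisson_pgf (μ : ℝ≥0) {r : ℝ} (h0 : 0 ≤ r) (h1 : r ≤ 1) :
    ∫ n, r ^ n ∂(poissonMeasure μ) = Real.exp (μ * (r - 1)) := by
  rw [integral_countable' (my_poisson_integrable μ h0 h1)]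
  have hsingle : ∀ n : ℕ, ((poissonMeasure μ) {n}).toReal = poissonPMFReal μ n := by
    intro n
    rw [← measureReal_def, poissonMeasure_real_singleton, poissonPMFReal]
  have hterm : ∀ n : ℕ, ((poissonMeasure μ) {n}).toReal • r ^ n
      = Real.exp (-μ) * ((μ * r) ^ n / n.factorial) := by
    intro n
    rw [hsingle n, smul_eq_mul, poissonPMFReal, mul_pow]
    ring
  simp only [measureReal_def]
  rw [tsum_congr hterm]
  have hs : HasSum (fun n : ℕ => (μ * r) ^ n / n.factorial) (Real.exp (μ * r)) := by
    rw [Real.exp_eq_exp_ℝ]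
    exact NormedSpace.expSeries_div_hasSum_exp ((μ : ℝ) * r)
  rw [tsum_mul_left, hs.tsum_eq, ← Real.exp_add]
  ring_nf

lemma my_iIndepFun_reindex {Ω ι ι' β : Type*} {mΩ : MeasurableSpace Ω} {μ : Measure Ω}
    [mβ : MeasurableSpace β] {f : ι → Ω → β}
    (h : iIndepFun f μ) {g : ι' → ι} (hg : Function.Injective g) :
    iIndepFun (fun i => f (g i)) μ := by
  classical
  rw [iIndepFun_iff_measure_inter_preimage_eq_mul] at h ⊢
  intro S sets H
  have key := h (S.map ⟨g, hg⟩) (sets := Function.extend g sets fun _ => Set.univ)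
    (by
      intro i hi
      simp only [Finset.mem_map, Function.Embedding.coeFn_mk] at hi
      obtain ⟨j, hj, rfl⟩ := hi
      rw [hg.extend_apply]
      exact H j hj)
  have hset : (⋂ i ∈ S.map ⟨g, hg⟩, f i ⁻¹' (Function.extend g sets (fun _ => Set.univ) i))
      = ⋂ j ∈ S, f (g j) ⁻¹' sets j := by
    ext x
    simp only [Set.mem_iInter, Finset.mem_map, Function.Embedding.coeFn_mk]
    constructor
    · intro hx j hj
      have := hx (g j) ⟨j, hj, rfl⟩
      rwa [hg.extend_apply] at this
    · rintro hx i ⟨j, hj, rfl⟩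
      rw [hg.extend_apply]
      exact hx j hj
  have hprod : (∏ i ∈ S.map ⟨g, hg⟩, μ (f i ⁻¹' (Function.extend g sets (fun _ => Set.univ) i)))
      = ∏ j ∈ S, μ (f (g j) ⁻¹' sets j) := by
    rw [Finset.prod_map]
    exact Finset.prod_congr rfl fun j _ => by rw [Function.Embedding.coeFn_mk, hg.extend_apply]
  rw [hset, hprod] at key
  exact key

theorem truncated_branching_extinction_upper_bound
    {Ω : Type*} [MeasureSpace Ω] [IsProbabilityMeasure (ℙ : Measure Ω)]
    (η : ℝ) (hη : 0 < η) (K : ℕ) (hK : 1 ≤ K)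
    (Y : ℕ → ℕ → Ω → ℕ)
    (hYmeas : ∀ t i, Measurable (Y t i))
    (hYindep : iIndepFun
      (fun p : ℕ × ℕ => Y p.1 p.2) ℙ)
    (hYdist : ∀ t i, Measure.map (Y t i) ℙ = poissonMeasure (Real.toNNReal (1 + η)))
    (N : ℕ → Ω → ℕ)
    (hN0 : ∀ ω, N 0 ω = 1)
    (hN : ∀ t ω, N (t + 1) ω = min (∑ i ∈ Finset.range (N t ω), Y t i ω) K)
    (l : ℝ) (hl : 0 < l) (hlfix : (1 - Real.exp (-l)) * (1 + η) = l)
    (T : ℕ) :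
    (ℙ {ω | N T ω = 0}).toReal ≤ Real.exp (-l) + T * Real.exp (-l * K) := by
  classical
  set r : ℝ := Real.exp (-l) with hr_def
  have hr0 : (0:ℝ) < r := Real.exp_pos _
  have hr1 : r ≤ 1 := by
    rw [hr_def]
    calc Real.exp (-l) ≤ Real.exp 0 := Real.exp_le_exp.mpr (by linarith)
      _ = 1 := Real.exp_zero
  have hpow_le_one : ∀ n : ℕ, r ^ n ≤ 1 := fun n => pow_le_one₀ hr0.le hr1
  have hpow_nonneg : ∀ n : ℕ, 0 ≤ r ^ n := fun n => pow_nonneg hr0.le n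
  have hμ : ((Real.toNNReal (1 + η) : ℝ≥0) : ℝ) = 1 + η :=
    Real.coe_toNNReal _ (by linarith)
  -- fixed point
  have hfix : Real.exp (((Real.toNNReal (1 + η) : ℝ≥0) : ℝ) * (r - 1)) = r := by
    rw [hμ, hr_def]
    congr 1
    linear_combination -hlfix
  -- generic integrability
  have hint : ∀ (f : Ω → ℕ), Measurable f → Integrable (fun ω => r ^ f ω) ℙ := by
    intro f hf
    refine ⟨((measurable_of_countable _).comp hf).aestronglyMeasurable, ?_⟩
    refine HasFiniteIntegral.of_bounded (C := 1) (Filter.Eventually.of_forall fun ω => ?_)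
    rw [Real.norm_eq_abs, abs_of_nonneg (hpow_nonneg _)]
    exact hpow_le_one _
  -- N is bounded by K
  have hNle : ∀ t ω, N t ω ≤ K := by
    intro t ω
    cases t with
    | zero => rw [hN0]; exact hK
    | succ t => rw [hN]; exact min_le_right _ _
  -- expectation of r ^ Y
  have hEY : ∀ t i, ∫ ω, r ^ (Y t i ω) ∂ℙ = r := by
    intro t i
    have h1 : ∫ ω, r ^ (Y t i ω) ∂ℙ = ∫ n, r ^ n ∂(Measure.map (Y t i) ℙ) := by
      rw [integral_map (hYmeas t i).aemeasurable
        (measurable_of_countable _).aestronglyMeasurable]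
    rw [h1, hYdist t i, my_poisson_pgf _ hr0.le hr1, hfix]
  -- row independence
  have hrow : ∀ t, iIndepFun (fun i => Y t i) ℙ := by
    intro t
    exact my_iIndepFun_reindex hYindep (g := fun i => (t, i))
      (fun a b hab => by simpa using hab)
  -- expectation of r ^ partial sums
  have hES : ∀ t k, ∫ ω, r ^ (∑ i ∈ Finset.range k, Y t i ω) ∂ℙ = r ^ k := by
    intro t k
    induction k with
    | zero => simp
    | succ k ih =>
      have hind : IndepFun (∑ i ∈ Finset.range k, Y t i) (Y t k) ℙ :=
        (hrow t).indepFun_sum_range_succ (fun i => hYmeas t i) k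
      have hind' : IndepFun (fun ω => r ^ ((∑ i ∈ Finset.range k, Y t i) ω))
          (fun ω => r ^ (Y t k ω)) ℙ :=
        hind.comp (measurable_of_countable (fun n : ℕ => r ^ n))
          (measurable_of_countable (fun n : ℕ => r ^ n))
      have hsum_meas : Measurable (∑ i ∈ Finset.range k, Y t i) := by
        rw [Finset.sum_fn]
        exact Finset.measurable_sum _ fun i _ => hYmeas t i
      have heq : (fun ω => r ^ (∑ i ∈ Finset.range (k+1), Y t i ω)) =
          (fun ω => r ^ ((∑ i ∈ Finset.range k, Y t i) ω)) * (fun ω => r ^ (Y t k ω)) := by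
        funext ω
        simp only [Pi.mul_apply, Finset.sum_apply, Finset.sum_range_succ, pow_add]
      rw [heq, hind'.integral_mul_eq_mul_integral
        ((measurable_of_countable _).comp hsum_meas).aestronglyMeasurable
        ((measurable_of_countable _).comp (hYmeas t k)).aestronglyMeasurable]
      have : ∫ ω, r ^ ((∑ i ∈ Finset.range k, Y t i) ω) ∂ℙ = r ^ k := by
        rw [← ih]
        congr 1
        funext ω
        simp [Finset.sum_apply]
      rw [this, hEY t k, pow_succ]
  -- sub sigma algebras
  set F : ℕ → MeasurableSpace Ω := fun t =>
    ⨆ p ∈ {p : ℕ × ℕ | p.1 < t}, MeasurableSpace.comap (Y p.1 p.2) inferInstance with hF_def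
  set G : ℕ → MeasurableSpace Ω := fun t =>
    ⨆ p ∈ {p : ℕ × ℕ | p.1 = t}, MeasurableSpace.comap (Y p.1 p.2) inferInstance with hG_def
  have hcomap_le : ∀ p : ℕ × ℕ,
      MeasurableSpace.comap (Y p.1 p.2) inferInstance ≤ (inferInstance : MeasurableSpace Ω) :=
    fun p => measurable_iff_comap_le.mp (hYmeas p.1 p.2)
  have hF_le : ∀ t, F t ≤ (inferInstance : MeasurableSpace Ω) :=
    fun t => iSup₂_le fun p _ => hcomap_le p
  have hG_le : ∀ t, G t ≤ (inferInstance : MeasurableSpace Ω) :=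
    fun t => iSup₂_le fun p _ => hcomap_le p
  have hFG : ∀ t, Indep (F t) (G t) ℙ := by
    intro t
    refine indep_iSup_of_disjoint hcomap_le ((iIndepFun_iff_iIndep _ _ _).mp hYindep) ?_
    intro s hs1 hs2 p hp
    have h1 := hs1 hp
    have h2 := hs2 hp
    simp only [Set.mem_setOf_eq] at h1 h2
    omega
  -- measurability wrt F
  have hY_F : ∀ s i t, s < t → Measurable[F t] (Y s i) := by
    intro s i t hst
    rw [measurable_iff_comap_le]
    exact le_iSup₂_of_le (s, i) hst le_rfl
  have hY_G : ∀ t i, Measurable[G t] (Y t i) := by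
    intro t i
    rw [measurable_iff_comap_le]
    exact le_iSup₂_of_le (t, i) rfl le_rfl
  have hFmono : ∀ t, F t ≤ F (t + 1) := by
    intro t
    refine iSup₂_le fun p hp => le_iSup₂_of_le p ?_ le_rfl
    simp only [Set.mem_setOf_eq] at hp ⊢
    omega
  have hNfun : ∀ t, N (t + 1) = fun ω =>
      min (∑ k ∈ Finset.range (K + 1), if N t ω = k then ∑ i ∈ Finset.range k, Y t i ω else 0)
        K := by
    intro t
    funext ω
    rw [hN]
    congr 1
    rw [Finset.sum_ite_eq, if_pos (Finset.mem_range.mpr (Nat.lt_succ_of_le (hNle t ω)))]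
  have hN_F : ∀ t, Measurable[F t] (N t) := by
    intro t
    induction t with
    | zero =>
      have : N 0 = fun _ => 1 := funext hN0
      rw [this]
      exact measurable_const
    | succ t ih =>
      rw [hNfun t]
      have hg : Measurable[F (t+1)]
          (fun ω => ∑ k ∈ Finset.range (K + 1),
            if N t ω = k then ∑ i ∈ Finset.range k, Y t i ω else 0) := by
        refine Finset.measurable_sum _ fun k _ => Measurable.ite ?_ ?_ measurable_const
        · exact (ih.mono (hFmono t) le_rfl) (measurableSet_singleton k)
        · exact Finset.measurable_sum _ fun i _ => hY_F t i (t+1) (Nat.lt_succ_self t)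
      exact (measurable_from_top (f := fun n : ℕ => min n K)).comp hg
  have hNmeas : ∀ t, Measurable (N t) := fun t => (hN_F t).mono (hF_le t) le_rfl
  -- S and its measurability
  set S : ℕ → Ω → ℕ := fun t ω => ∑ i ∈ Finset.range (N t ω), Y t i ω with hS_def
  have hSfun : ∀ t, S t = fun ω =>
      ∑ k ∈ Finset.range (K + 1), if N t ω = k then ∑ i ∈ Finset.range k, Y t i ω else 0 := by
    intro t
    funext ω
    rw [hS_def]
    simp only
    rw [Finset.sum_ite_eq, if_pos (Finset.mem_range.mpr (Nat.lt_succ_of_le (hNle t ω)))]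
  have hSmeas : ∀ t, Measurable (S t) := by
    intro t
    rw [hSfun t]
    refine Finset.measurable_sum _ fun k _ => Measurable.ite ?_ ?_ measurable_const
    · exact (hNmeas t) (measurableSet_singleton k)
    · exact Finset.measurable_sum _ fun i _ => hYmeas t i
  -- the key step: ∫ r ^ S t = ∫ r ^ N t
  have hstep : ∀ t, ∫ ω, r ^ (S t ω) ∂ℙ = ∫ ω, r ^ (N t ω) ∂ℙ := by
    intro t
    have hA : ∀ k : ℕ, MeasurableSet (N t ⁻¹' {k}) :=
      fun k => (hNmeas t) (measurableSet_singleton k)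
    set I : ℕ → Ω → ℝ := fun k => Set.indicator (N t ⁻¹' {k}) (fun _ => 1) with hI_def
    set g : ℕ → Ω → ℝ := fun k ω => r ^ (∑ i ∈ Finset.range k, Y t i ω) with hg_def
    have hImeas : ∀ k, Measurable (I k) := fun k => (measurable_const).indicator (hA k)
    have hgmeas : ∀ k, Measurable (g k) := fun k =>
      (measurable_of_countable _).comp (Finset.measurable_sum _ fun i _ => hYmeas t i)
    have hIint : ∀ k, Integrable (I k) ℙ :=
      fun k => (integrable_const (1:ℝ)).indicator (hA k)
    have hIval : ∀ k ω, I k ω = if N t ω = k then 1 else 0 := by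
      intro k ω
      rw [hI_def]
      simp [Set.indicator_apply, Set.mem_preimage]
    -- pointwise decompositions
    have hdec1 : ∀ ω, r ^ (S t ω) = ∑ k ∈ Finset.range (K + 1), I k ω * g k ω := by
      intro ω
      have h1 : ∀ k, I k ω * g k ω = if N t ω = k then g k ω else 0 := by
        intro k
        rw [hIval]
        by_cases h : N t ω = k <;> simp [h]
      rw [Finset.sum_congr rfl fun k _ => h1 k, Finset.sum_ite_eq,
        if_pos (Finset.mem_range.mpr (Nat.lt_succ_of_le (hNle t ω)))]
    have hdec2 : ∀ ω, r ^ (N t ω) = ∑ k ∈ Finset.range (K + 1), I k ω * r ^ k := by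
      intro ω
      have h1 : ∀ k, I k ω * r ^ k = if N t ω = k then r ^ k else 0 := by
        intro k
        rw [hIval]
        by_cases h : N t ω = k <;> simp [h]
      rw [Finset.sum_congr rfl fun k _ => h1 k, Finset.sum_ite_eq,
        if_pos (Finset.mem_range.mpr (Nat.lt_succ_of_le (hNle t ω)))]
    -- independence
    have hindep : ∀ k, IndepFun (I k) (g k) ℙ := by
      intro k
      rw [IndepFun_iff_Indep]
      refine indep_of_indep_of_le_left (indep_of_indep_of_le_right (hFG t) ?_) ?_
      · rw [← measurable_iff_comap_le]
        exact (measurable_of_countable (fun n : ℕ => r ^ n)).comp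
          (Finset.measurable_sum _ fun i _ => hY_G t i)
      · rw [← measurable_iff_comap_le]
        exact Measurable.indicator measurable_const ((hN_F t) (measurableSet_singleton k))
    have hIg_int : ∀ k, Integrable (fun ω => I k ω * g k ω) ℙ := by
      intro k
      refine ⟨((hImeas k).mul (hgmeas k)).aestronglyMeasurable, ?_⟩
      refine HasFiniteIntegral.of_bounded (C := 1) (Filter.Eventually.of_forall fun ω => ?_)
      rw [Real.norm_eq_abs, hIval]
      by_cases h : N t ω = k
      · rw [if_pos h, one_mul, abs_of_nonneg (hpow_nonneg _)]
        exact hpow_le_one _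
      · rw [if_neg h, zero_mul, abs_zero]
        exact zero_le_one
    have hIr_int : ∀ k, Integrable (fun ω => I k ω * r ^ k) ℙ :=
      fun k => (hIint k).mul_const _
    have hintI : ∀ k, ∫ ω, I k ω ∂ℙ = (ℙ (N t ⁻¹' {k})).toReal := by
      intro k
      rw [hI_def]
      exact integral_indicator_one (hA k)
    have lhs : ∫ ω, r ^ (S t ω) ∂ℙ
        = ∑ k ∈ Finset.range (K + 1), (ℙ (N t ⁻¹' {k})).toReal * r ^ k := by
      rw [show (fun ω => r ^ (S t ω)) = fun ω => ∑ k ∈ Finset.range (K + 1), I k ω * g k ω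
        from funext hdec1]
      rw [integral_finset_sum _ fun k _ => hIg_int k]
      refine Finset.sum_congr rfl fun k _ => ?_
      rw [show (fun ω => I k ω * g k ω) = I k * g k from rfl]
      rw [(hindep k).integral_mul_eq_mul_integral
        (hImeas k).aestronglyMeasurable (hgmeas k).aestronglyMeasurable]
      rw [hintI k, hES t k]
    have rhs : ∫ ω, r ^ (N t ω) ∂ℙ
        = ∑ k ∈ Finset.range (K + 1), (ℙ (N t ⁻¹' {k})).toReal * r ^ k := by
      rw [show (fun ω => r ^ (N t ω)) = fun ω => ∑ k ∈ Finset.range (K + 1), I k ω * r ^ k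
        from funext hdec2]
      rw [integral_finset_sum _ fun k _ => hIr_int k]
      refine Finset.sum_congr rfl fun k _ => ?_
      rw [integral_mul_const, hintI k]
    rw [lhs, rhs]
  -- main induction
  have key : ∀ t : ℕ, ∫ ω, r ^ (N t ω) ∂ℙ ≤ r + t * r ^ K := by
    intro t
    induction t with
    | zero =>
      simp only [hN0, pow_one, Nat.cast_zero, zero_mul, add_zero]
      rw [integral_const, probReal_univ, one_smul]
    | succ t ih =>
      have h1 : ∀ ω, r ^ (N (t+1) ω) ≤ r ^ (S t ω) + r ^ K := by
        intro ω
        rw [hN]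
        rcases le_total (∑ i ∈ Finset.range (N t ω), Y t i ω) K with h | h
        · rw [min_eq_left h]
          exact le_add_of_nonneg_right (hpow_nonneg _)
        · rw [min_eq_right h]
          exact le_add_of_nonneg_left (hpow_nonneg _)
      have h2 : ∫ ω, r ^ (N (t+1) ω) ∂ℙ ≤ ∫ ω, (r ^ (S t ω) + r ^ K) ∂ℙ :=
        integral_mono (hint _ (hNmeas (t+1))) ((hint _ (hSmeas t)).add (integrable_const _)) h1
      have h3 : ∫ ω, (r ^ (S t ω) + r ^ K) ∂ℙ = ∫ ω, r ^ (S t ω) ∂ℙ + r ^ K := by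
        rw [integral_add (hint _ (hSmeas t)) (integrable_const _), integral_const,
          probReal_univ, one_smul]
      calc ∫ ω, r ^ (N (t+1) ω) ∂ℙ ≤ ∫ ω, r ^ (S t ω) ∂ℙ + r ^ K := by rw [← h3]; exact h2
        _ = ∫ ω, r ^ (N t ω) ∂ℙ + r ^ K := by rw [hstep t]
        _ ≤ r + t * r ^ K + r ^ K := by linarith
        _ = r + (t + 1 : ℕ) * r ^ K := by push_cast; ring
  -- conclude
  have hrK : r ^ K = Real.exp (-l * K) := by
    rw [hr_def, show -l * (K:ℝ) = (K:ℕ) * (-l) by ring, Real.exp_nat_mul]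
  have hA0 : MeasurableSet {ω | N T ω = 0} := by
    have : {ω | N T ω = 0} = N T ⁻¹' {0} := rfl
    rw [this]
    exact (hNmeas T) (measurableSet_singleton 0)
  have hfinal : (ℙ {ω | N T ω = 0}).toReal ≤ ∫ ω, r ^ (N T ω) ∂ℙ := by
    rw [← measureReal_def, ← integral_indicator_one hA0]
    refine integral_mono ((integrable_const (1:ℝ)).indicator hA0) (hint _ (hNmeas T))
      fun ω => ?_
    by_cases h : N T ω = 0
    · simp [Set.indicator_apply, Set.mem_setOf_eq, h]
    · simp only [Set.indicator_apply, Set.mem_setOf_eq, h, if_neg h]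
      exact hpow_nonneg _
  calc (ℙ {ω | N T ω = 0}).toReal ≤ ∫ ω, r ^ (N T ω) ∂ℙ := hfinal
    _ ≤ r + T * r ^ K := key T
    _ = Real.exp (-l) + T * Real.exp (-l * K) := by rw [hrK, hr_def]
end

section
/- There exists η₀ > 0 such that for all η with 0 < η < η₀, all integers K ≥ 1, and all integers T ≥ 0 with T ≤ e^{ηK}·η/3, the truncated branching process satisfies ℙ(N_T ≥ 1) ≥ η/3. -/
open MeasureTheory ProbabilityTheory
open scoped NNReal Nat

namespace TruncAux

variable {Ω : Type} [mΩ : MeasurableSpace Ω] {P : Measure Ω} [IsProbabilityMeasure P]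
  {Y : ℕ → ℕ → Ω → ℕ}

/-- σ-algebra generated by a set of indices of the family `Y`. -/
abbrev G (Y : ℕ → ℕ → Ω → ℕ) (S : Set (ℕ × ℕ)) : MeasurableSpace Ω :=
  ⨆ p ∈ S, MeasurableSpace.comap (Y p.1 p.2) inferInstance

lemma measurable_G_Y {S : Set (ℕ × ℕ)} {t i : ℕ} (hS : (t, i) ∈ S) :
    Measurable[G Y S] (Y t i) :=
  measurable_iff_comap_le.2
    (le_iSup₂ (f := fun (p : ℕ × ℕ) (_ : p ∈ S) =>
      MeasurableSpace.comap (Y p.1 p.2) inferInstance) (t, i) hS)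

set_option maxHeartbeats 2000000 in
lemma indepFun_of_G (hm : ∀ t i, Measurable (Y t i))
    (hindep : iIndepFun (fun p : ℕ × ℕ => Y p.1 p.2) P)
    {S T : Set (ℕ × ℕ)} (hST : Disjoint S T) {β γ : Type*} [MeasurableSpace β] [MeasurableSpace γ]
    {f : Ω → β} {g : Ω → γ} (hf : Measurable[G Y S] f) (hg : Measurable[G Y T] g) :
    IndepFun f g P := by
  have h1 : Indep (G Y S) (G Y T) P :=
    indep_iSup_of_disjoint
      (m := fun p : ℕ × ℕ => MeasurableSpace.comap (Y p.1 p.2) inferInstance)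
      (fun p => (hm p.1 p.2).comap_le) hindep.iIndep hST
  exact indep_of_indep_of_le_left
    (indep_of_indep_of_le_right h1 (measurable_iff_comap_le.mp hg))
    (measurable_iff_comap_le.mp hf)



lemma integral_pow_le_one_integrable {α : Type*} [MeasurableSpace α] (μ : Measure α)
    [IsProbabilityMeasure μ] {f : α → ℝ} (hf : AEStronglyMeasurable f μ)
    (h : ∀ a, ‖f a‖ ≤ 1) : Integrable f μ :=
  Integrable.mono' (integrable_const 1) hf (Filter.Eventually.of_forall h)

lemma integral_pow_poisson (r : ℝ≥0) {s : ℝ} (hs0 : 0 ≤ s) (hs1 : s ≤ 1) :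
    ∫ y, s ^ y ∂(poissonMeasure r) = Real.exp (r * (s - 1)) := by
  have hint : Integrable (fun y : ℕ => s ^ y) (poissonMeasure r) := by
    apply integral_pow_le_one_integrable _ ((measurable_of_countable _).aestronglyMeasurable)
    intro y
    rw [Real.norm_eq_abs, abs_of_nonneg (pow_nonneg hs0 _)]
    exact pow_le_one₀ hs0 hs1
  rw [integral_poissonMeasure' hint]
  simp_rw [smul_eq_mul]
  have hsum : HasSum (fun n : ℕ => ((r : ℝ) * s) ^ n / n !) (Real.exp (r * s)) := by
    rw [Real.exp_eq_exp_ℝ]; exact NormedSpace.expSeries_div_hasSum_exp _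
  have h2 : HasSum (fun n : ℕ => Real.exp (-(r : ℝ)) * (r : ℝ) ^ n / n ! * s ^ n)
      (Real.exp (-(r : ℝ)) * Real.exp (r * s)) := by
    have h3 := hsum.mul_left (Real.exp (-(r : ℝ)))
    have he : (fun n : ℕ => Real.exp (-(r : ℝ)) * (r : ℝ) ^ n / n ! * s ^ n)
        = fun i : ℕ => Real.exp (-(r : ℝ)) * (((r : ℝ) * s) ^ i / i !) := by
      funext n
      rw [mul_pow]
      ring
    rw [he]; exact h3
  rw [h2.tsum_eq, ← Real.exp_add]
  congr 1
  ring

lemma exp_fixed {η : ℝ} (h0 : 0 < η) (h1 : η ≤ 1 / 10) :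
    Real.exp ((1 + η) * ((1 - 3 * η / 2) - 1)) ≤ 1 - 3 * η / 2 := by
  have hrw : (1 + η) * ((1 - 3 * η / 2) - 1) = -(3 * η / 2 * (1 + η)) := by ring
  rw [hrw]
  set u : ℝ := 3 * η / 2 * (1 + η) with hu
  have hu0 : 0 ≤ u := by nlinarith
  have hxabs : |(-u)| = u := by rw [abs_neg, abs_of_nonneg hu0]
  have habs : |(-u)| ≤ 1 := by rw [hxabs]; nlinarith
  have hb := Real.exp_bound habs (by norm_num : 0 < 3)
  have hsum : ∑ i ∈ Finset.range 3, (-u) ^ i / (Nat.factorial i : ℝ) =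
      1 + -u + u ^ 2 / 2 := by
    simp [Finset.sum_range_succ, Nat.factorial]
    try ring
  rw [hsum, hxabs] at hb
  have h2 : Real.exp (-u) - (1 + -u + u ^ 2 / 2) ≤ u ^ 3 * ((3 : ℕ).succ / ((Nat.factorial 3 : ℝ) * 3)) :=
    le_trans (le_abs_self _) hb
  have h3 : ((3 : ℕ).succ / ((Nat.factorial 3 : ℝ) * 3) : ℝ) = 2 / 9 := by
    norm_num [Nat.factorial]
  rw [h3] at h2
  rw [hu] at h2 hu0 ⊢
  have key : 1 + -(3 * η / 2 * (1 + η)) + (3 * η / 2 * (1 + η)) ^ 2 / 2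
      + (3 * η / 2 * (1 + η)) ^ 3 * (2 / 9) ≤ 1 - 3 * η / 2 := by
    nlinarith [mul_pos h0 h0, mul_pos (mul_pos h0 h0) h0,
      mul_pos (mul_pos (mul_pos h0 h0) h0) h0,
      mul_le_mul_of_nonneg_left h1 (mul_pos h0 h0).le,
      mul_le_mul_of_nonneg_left h1 (mul_pos (mul_pos h0 h0) h0).le,
      mul_le_mul_of_nonneg_left h1 h0.le]
  linarith [h2, key]

omit mΩ in
lemma G_mono {S T : Set (ℕ × ℕ)} (h : S ⊆ T) : G Y S ≤ G Y T :=
  iSup₂_le fun p hp => le_iSup₂ (f := fun (p : ℕ × ℕ) (_ : p ∈ T) =>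
    MeasurableSpace.comap (Y p.1 p.2) inferInstance) p (h hp)

lemma G_le (hm : ∀ t i, Measurable (Y t i)) (S : Set (ℕ × ℕ)) : G Y S ≤ mΩ :=
  iSup₂_le fun p _ => (hm p.1 p.2).comap_le

lemma pow_min_le {s : ℝ} (hs0 : 0 ≤ s) (a K : ℕ) : s ^ min a K ≤ s ^ a + s ^ K := by
  rcases le_total a K with h | h
  · rw [min_eq_left h]
    exact le_add_of_nonneg_right (pow_nonneg hs0 _)
  · rw [min_eq_right h]
    exact le_add_of_nonneg_left (pow_nonneg hs0 _)

lemma integral_ite_eq {α : Type*} [MeasurableSpace α] (μ : Measure α) {N : α → ℕ}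
    (hN : Measurable N) (n : ℕ) :
    ∫ ω, (if N ω = n then (1 : ℝ) else 0) ∂μ = (μ {ω | N ω = n}).toReal := by
  have hset : MeasurableSet {ω | N ω = n} := hN (measurableSet_singleton n)
  have h1 : (fun ω => if N ω = n then (1 : ℝ) else 0)
      = Set.indicator {ω | N ω = n} (fun _ => (1 : ℝ)) := by
    funext ω
    by_cases h : N ω = n <;> simp [Set.indicator_apply, h]
  rw [h1, integral_indicator_const (1 : ℝ) hset, smul_eq_mul, mul_one, measureReal_def]

lemma integrable_ite_mul_pow {α : Type*} [MeasurableSpace α] (μ : Measure α)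
    [IsProbabilityMeasure μ] {s : ℝ} (hs0 : 0 ≤ s) (hs1 : s ≤ 1) {N : α → ℕ}
    (hN : Measurable N) {f : α → ℕ} (hf : Measurable f) (n : ℕ) :
    Integrable (fun ω => (if N ω = n then (1 : ℝ) else 0) * s ^ (f ω)) μ := by
  apply integral_pow_le_one_integrable μ
  · exact (((measurable_of_countable (fun m : ℕ => if m = n then (1 : ℝ) else 0)).comp hN).mul
      ((measurable_of_countable (fun m : ℕ => s ^ m)).comp hf)).aestronglyMeasurable
  · intro ω
    rw [Real.norm_eq_abs, abs_mul]
    have h1 : |if N ω = n then (1 : ℝ) else 0| ≤ 1 := by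
      by_cases h : N ω = n <;> simp [h]
    have h2 : |s ^ (f ω)| ≤ 1 := by
      rw [abs_of_nonneg (pow_nonneg hs0 _)]
      exact pow_le_one₀ hs0 hs1
    calc |if N ω = n then (1 : ℝ) else 0| * |s ^ (f ω)| ≤ 1 * 1 :=
          mul_le_mul h1 h2 (abs_nonneg _) zero_le_one
      _ = 1 := mul_one 1

lemma integrable_pow_comp {α : Type*} [MeasurableSpace α] (μ : Measure α)
    [IsProbabilityMeasure μ] {s : ℝ} (hs0 : 0 ≤ s) (hs1 : s ≤ 1) {f : α → ℕ}
    (hf : Measurable f) : Integrable (fun ω => s ^ (f ω)) μ := by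
  apply integral_pow_le_one_integrable μ
    ((measurable_of_countable (fun m : ℕ => s ^ m)).comp hf).aestronglyMeasurable
  intro ω
  show ‖s ^ (f ω)‖ ≤ 1
  rw [Real.norm_eq_abs, abs_of_nonneg (pow_nonneg hs0 _)]
  exact pow_le_one₀ hs0 hs1

end TruncAux

open TruncAux in
theorem truncated_branching_survival :
    ∃ η₀ : ℝ, 0 < η₀ ∧
      ∀ (η : ℝ), 0 < η → η < η₀ →
      ∀ (K : ℕ), 1 ≤ K →
      ∀ (Ω : Type) (_ : MeasurableSpace Ω) (P : Measure Ω), IsProbabilityMeasure P →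
      ∀ (Y : ℕ → ℕ → Ω → ℕ),
        (∀ t i, Measurable (Y t i)) →
        iIndepFun (fun p : ℕ × ℕ => Y p.1 p.2) P →
        (∀ t i, Measure.map (Y t i) P = poissonMeasure (Real.toNNReal (1 + η))) →
      ∀ (N : ℕ → Ω → ℕ),
        (∀ ω, N 0 ω = 1) →
        (∀ t ω, N (t + 1) ω = min (∑ i ∈ Finset.range (N t ω), Y t i ω) K) →
      ∀ (T : ℕ), (T : ℝ) ≤ Real.exp (η * K) * η / 3 →
        (P {ω | 1 ≤ N T ω}).toReal ≥ η / 3 := by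
  refine ⟨1/10, by norm_num, ?_⟩
  intro η hη hη' K hK Ω mΩ P hP Y hYm hYi hYd N hN0 hNr T hT
  haveI := hP
  have hη10 : η ≤ 1 / 10 := le_of_lt hη'
  set s : ℝ := 1 - 3 * η / 2 with hs_def
  have hs0 : 0 < s := by rw [hs_def]; linarith
  have hs1 : s ≤ 1 := by rw [hs_def]; linarith
  set g : ℝ := Real.exp ((1 + η) * (s - 1)) with hg_def
  have hg0 : 0 ≤ g := (Real.exp_pos _).le
  have hgs : g ≤ s := by
    rw [hg_def, hs_def]
    exact exp_fixed hη hη10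
  -- basic facts about N
  have hNK : ∀ t ω, N t ω ≤ K := by
    intro t ω
    cases t with
    | zero => rw [hN0 ω]; exact hK
    | succ t => rw [hNr t ω]; exact min_le_right _ _
  have hsum_rw : ∀ t ω, ∑ i ∈ Finset.range (N t ω), Y t i ω
      = ∑ i ∈ Finset.range K, (fun q : ℕ × ℕ => if i < q.1 then q.2 else 0) (N t ω, Y t i ω) := by
    intro t ω
    have hfl : Finset.filter (fun i => i < N t ω) (Finset.range K) = Finset.range (N t ω) := by
      ext i
      simp only [Finset.mem_filter, Finset.mem_range]
      have := hNK t ω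
      omega
    simp only
    rw [← Finset.sum_filter, hfl]
  -- measurability of N
  have hNmG : ∀ t, Measurable[G Y {q : ℕ × ℕ | q.1 < t}] (N t) := by
    intro t
    induction t with
    | zero =>
      have h : N 0 = fun _ => 1 := funext hN0
      rw [h]; exact measurable_const
    | succ t ih =>
      have hNt : Measurable[G Y {q : ℕ × ℕ | q.1 < t + 1}] (N t) :=
        ih.mono (G_mono (fun q hq => Nat.lt_succ_of_lt hq)) le_rfl
      have hY' : ∀ i, Measurable[G Y {q : ℕ × ℕ | q.1 < t + 1}] (Y t i) := fun i =>
        measurable_G_Y (by simp only [Set.mem_setOf_eq]; omega)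
      have h : N (t + 1) = fun ω =>
          (fun m : ℕ => min m K) (∑ i ∈ Finset.range K,
            (fun q : ℕ × ℕ => if i < q.1 then q.2 else 0) (N t ω, Y t i ω)) := by
        funext ω
        simp only
        rw [hNr t ω, hsum_rw t ω]
      rw [h]
      exact (measurable_of_countable (fun m : ℕ => min m K)).comp'
        (Finset.measurable_sum (Finset.range K) (fun i _ =>
          (measurable_of_countable (fun q : ℕ × ℕ => if i < q.1 then q.2 else 0)).comp'
            (hNt.prodMk (hY' i))))
  have hNm : ∀ t, Measurable (N t) := fun t => (hNmG t).mono (G_le hYm _) le_rfl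
  have hSm : ∀ t n, Measurable (fun ω => ∑ i ∈ Finset.range n, Y t i ω) := fun t n =>
    Finset.measurable_sum (Finset.range n) (fun i _ => hYm t i)
  have hSNm : ∀ t, Measurable (fun ω => ∑ i ∈ Finset.range (N t ω), Y t i ω) := by
    intro t
    have h : (fun ω => ∑ i ∈ Finset.range (N t ω), Y t i ω)
        = fun ω => ∑ i ∈ Finset.range K,
            (fun q : ℕ × ℕ => if i < q.1 then q.2 else 0) (N t ω, Y t i ω) := by
      funext ω; exact hsum_rw t ω
    rw [h]
    exact Finset.measurable_sum (Finset.range K) fun i _ =>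
      (measurable_of_countable (fun q : ℕ × ℕ => if i < q.1 then q.2 else 0)).comp'
        ((hNm t).prodMk (hYm t i))
  -- one-variable expectation
  have hlam : ((Real.toNNReal (1 + η) : NNReal) : ℝ) = 1 + η := Real.coe_toNNReal _ (by linarith)
  have hEY : ∀ t i, ∫ ω, s ^ (Y t i ω) ∂P = g := by
    intro t i
    have h1 : ∫ y, s ^ y ∂(Measure.map (Y t i) P) = ∫ ω, s ^ (Y t i ω) ∂P :=
      integral_map (hYm t i).aemeasurable
        ((measurable_of_countable (fun y : ℕ => s ^ y)).aestronglyMeasurable)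
    rw [← h1, hYd t i, integral_pow_poisson _ hs0.le hs1, hlam, hg_def]
  -- expectation of s ^ (sum of n iid Poissons)
  have hEsum : ∀ t n, ∫ ω, s ^ (∑ i ∈ Finset.range n, Y t i ω) ∂P = g ^ n := by
    intro t n
    induction n with
    | zero => simp
    | succ n ih =>
      have hif : IndepFun (fun ω => ∑ i ∈ Finset.range n, Y t i ω) (Y t n) P := by
        apply indepFun_of_G hYm hYi
          (S := {q : ℕ × ℕ | q.1 = t ∧ q.2 < n}) (T := {(t, n)})
        · rw [Set.disjoint_left]
          rintro ⟨a, b⟩ hab hab'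
          simp only [Set.mem_setOf_eq] at hab
          simp only [Set.mem_singleton_iff, Prod.mk.injEq] at hab'
          omega
        · exact Finset.measurable_sum (Finset.range n) fun i hi =>
            measurable_G_Y ⟨rfl, Finset.mem_range.mp hi⟩
        · exact measurable_G_Y rfl
      have hif2 : IndepFun (fun ω => s ^ (∑ i ∈ Finset.range n, Y t i ω))
          (fun ω => s ^ (Y t n ω)) P :=
        hif.comp (measurable_of_countable (fun m : ℕ => s ^ m))
          (measurable_of_countable (fun m : ℕ => s ^ m))
      have heq : (fun ω => s ^ (∑ i ∈ Finset.range (n+1), Y t i ω))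
          = fun ω => (s ^ (∑ i ∈ Finset.range n, Y t i ω)) * s ^ (Y t n ω) := by
        funext ω; rw [Finset.sum_range_succ, pow_add]
      rw [heq, hif2.integral_fun_mul_eq_mul_integral
        (((measurable_of_countable (fun m : ℕ => s ^ m)).comp (hSm t n)).aestronglyMeasurable)
        (((measurable_of_countable (fun m : ℕ => s ^ m)).comp (hYm t n)).aestronglyMeasurable),
        ih, hEY t n, pow_succ]
  -- the key independence computation
  have hkey : ∀ t n, ∫ ω, (if N t ω = n then (1:ℝ) else 0)
      * s ^ (∑ i ∈ Finset.range n, Y t i ω) ∂P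
      = (P {ω | N t ω = n}).toReal * g ^ n := by
    intro t n
    have hif : IndepFun (N t) (fun ω => ∑ i ∈ Finset.range n, Y t i ω) P := by
      apply indepFun_of_G hYm hYi
        (S := {q : ℕ × ℕ | q.1 < t}) (T := {q : ℕ × ℕ | q.1 = t})
      · rw [Set.disjoint_left]
        rintro ⟨a, b⟩ hab hab'
        simp only [Set.mem_setOf_eq] at hab hab'
        omega
      · exact hNmG t
      · exact Finset.measurable_sum (Finset.range n) fun i _ => measurable_G_Y rfl
    have hif2 := hif.comp (measurable_of_countable (fun m : ℕ => if m = n then (1:ℝ) else 0))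
      (measurable_of_countable (fun m : ℕ => s ^ m))
    have h3 := hif2.integral_fun_mul_eq_mul_integral
      (((measurable_of_countable (fun m : ℕ => if m = n then (1:ℝ) else 0)).comp
        (hNm t)).aestronglyMeasurable)
      (((measurable_of_countable (fun m : ℕ => s ^ m)).comp (hSm t n)).aestronglyMeasurable)
    simp only [Function.comp_apply] at h3
    rw [h3]
    congr 1
    · exact integral_ite_eq P (hNm t) n
    · exact hEsum t n
  -- one-step supermartingale bound
  have hstep : ∀ t, ∫ ω, s ^ (N (t+1) ω) ∂P ≤ (∫ ω, s ^ (N t ω) ∂P) + s ^ K := by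
    intro t
    have h1 : ∫ ω, s ^ (N (t+1) ω) ∂P
        ≤ ∫ ω, (s ^ (∑ i ∈ Finset.range (N t ω), Y t i ω) + s ^ K) ∂P := by
      apply integral_mono (integrable_pow_comp P hs0.le hs1 (hNm (t+1)))
        ((integrable_pow_comp P hs0.le hs1 (hSNm t)).add (integrable_const _))
      intro ω
      show s ^ (N (t+1) ω) ≤ s ^ (∑ i ∈ Finset.range (N t ω), Y t i ω) + s ^ K
      rw [hNr t ω]
      exact pow_min_le hs0.le _ K
    have h2 : ∫ ω, (s ^ (∑ i ∈ Finset.range (N t ω), Y t i ω) + s ^ K) ∂P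
        = (∫ ω, s ^ (∑ i ∈ Finset.range (N t ω), Y t i ω) ∂P) + s ^ K := by
      rw [integral_add (integrable_pow_comp P hs0.le hs1 (hSNm t)) (integrable_const _),
        integral_const, probReal_univ, one_smul]
    have hd1 : (fun ω => s ^ (∑ i ∈ Finset.range (N t ω), Y t i ω))
        = fun ω => ∑ n ∈ Finset.range (K+1),
            (if N t ω = n then (1:ℝ) else 0) * s ^ (∑ i ∈ Finset.range n, Y t i ω) := by
      funext ω
      rw [Finset.sum_eq_single_of_mem (N t ω)
        (Finset.mem_range.2 (Nat.lt_succ_of_le (hNK t ω)))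
        (fun b _ hb => by rw [if_neg fun h => hb h.symm, zero_mul])]
      rw [if_pos rfl, one_mul]
    have hd2 : (fun ω => s ^ (N t ω))
        = fun ω => ∑ n ∈ Finset.range (K+1), (if N t ω = n then (1:ℝ) else 0) * s ^ n := by
      funext ω
      rw [Finset.sum_eq_single_of_mem (N t ω)
        (Finset.mem_range.2 (Nat.lt_succ_of_le (hNK t ω)))
        (fun b _ hb => by rw [if_neg fun h => hb h.symm, zero_mul])]
      rw [if_pos rfl, one_mul]
    have h3 : ∫ ω, s ^ (∑ i ∈ Finset.range (N t ω), Y t i ω) ∂P ≤ ∫ ω, s ^ (N t ω) ∂P := by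
      calc ∫ ω, s ^ (∑ i ∈ Finset.range (N t ω), Y t i ω) ∂P
          = ∑ n ∈ Finset.range (K+1), (P {ω | N t ω = n}).toReal * g ^ n := by
            rw [hd1, integral_finset_sum _
              (fun n _ => integrable_ite_mul_pow P hs0.le hs1 (hNm t) (hSm t n) n)]
            exact Finset.sum_congr rfl fun n _ => hkey t n
        _ ≤ ∑ n ∈ Finset.range (K+1), (P {ω | N t ω = n}).toReal * s ^ n :=
            Finset.sum_le_sum fun n _ => mul_le_mul_of_nonneg_left
              (pow_le_pow_left₀ hg0 hgs n) ENNReal.toReal_nonneg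
        _ = ∫ ω, s ^ (N t ω) ∂P := by
            rw [hd2, integral_finset_sum _
              (fun n _ => integrable_ite_mul_pow P hs0.le hs1 (hNm t)
                (measurable_const : Measurable (fun _ : Ω => n)) n)]
            exact (Finset.sum_congr rfl fun n _ => by
              rw [integral_mul_const, integral_ite_eq P (hNm t) n]).symm
    calc ∫ ω, s ^ (N (t+1) ω) ∂P
        ≤ ∫ ω, (s ^ (∑ i ∈ Finset.range (N t ω), Y t i ω) + s ^ K) ∂P := h1
      _ = (∫ ω, s ^ (∑ i ∈ Finset.range (N t ω), Y t i ω) ∂P) + s ^ K := h2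
      _ ≤ (∫ ω, s ^ (N t ω) ∂P) + s ^ K := add_le_add_left h3 _
  -- iterate
  have hIT : ∀ t, ∫ ω, s ^ (N t ω) ∂P ≤ s + t * s ^ K := by
    intro t
    induction t with
    | zero =>
      have h : (fun ω => s ^ (N 0 ω)) = fun _ => s := by
        funext ω; rw [hN0 ω, pow_one]
      rw [h, integral_const, probReal_univ, one_smul]
      simp
    | succ t ih =>
      calc ∫ ω, s ^ (N (t+1) ω) ∂P ≤ (∫ ω, s ^ (N t ω) ∂P) + s ^ K := hstep t
        _ ≤ s + t * s ^ K + s ^ K := by linarith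
        _ = s + (t + 1 : ℕ) * s ^ K := by push_cast; ring
  -- extinction probability bound
  have hext : (P {ω | N T ω = 0}).toReal ≤ s + T * s ^ K := by
    have h1 : (P {ω | N T ω = 0}).toReal = ∫ ω, (if N T ω = 0 then (1:ℝ) else 0) ∂P :=
      (integral_ite_eq P (hNm T) 0).symm
    rw [h1]
    refine le_trans (integral_mono ?_ (integrable_pow_comp P hs0.le hs1 (hNm T)) ?_) (hIT T)
    · exact integral_pow_le_one_integrable P
        (((measurable_of_countable (fun m : ℕ => if m = 0 then (1:ℝ) else 0)).comp
          (hNm T)).aestronglyMeasurable)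
        (fun ω => by by_cases h : N T ω = 0 <;> simp [Function.comp, h])
    · intro ω
      show (if N T ω = 0 then (1:ℝ) else 0) ≤ s ^ (N T ω)
      by_cases h : N T ω = 0
      · rw [if_pos h, h, pow_zero]
      · rw [if_neg h]; exact pow_nonneg hs0.le _
  have hcompl : {ω | 1 ≤ N T ω} = {ω | N T ω = 0}ᶜ := by
    ext ω
    simp [Nat.one_le_iff_ne_zero]
  have hPc : (P {ω | 1 ≤ N T ω}).toReal = 1 - (P {ω | N T ω = 0}).toReal := by
    have hms : MeasurableSet {ω | N T ω = 0} := hNm T (measurableSet_singleton 0)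
    rw [hcompl, prob_compl_eq_one_sub hms,
      ENNReal.toReal_sub_of_le prob_le_one ENNReal.one_ne_top, ENNReal.toReal_one]
  -- bound T * s ^ K
  have hsexp : s ≤ Real.exp (-(3*η/2)) := by
    have := Real.add_one_le_exp (-(3*η/2))
    rw [hs_def]
    linarith
  have hsK : s ^ K ≤ Real.exp ((K:ℝ) * (-(3*η/2))) := by
    rw [Real.exp_nat_mul]
    exact pow_le_pow_left₀ hs0.le hsexp K
  have hTsK : (T:ℝ) * s ^ K ≤ η / 3 := by
    have h0K : (0:ℝ) ≤ s ^ K := pow_nonneg hs0.le _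
    have h1 : (T:ℝ) * s ^ K
        ≤ (Real.exp (η*K) * η / 3) * Real.exp ((K:ℝ) * (-(3*η/2))) :=
      mul_le_mul hT hsK h0K (by positivity)
    have h2 : Real.exp (η*K) * Real.exp ((K:ℝ) * (-(3*η/2))) ≤ 1 := by
      rw [← Real.exp_add]
      apply Real.exp_le_one_iff.mpr
      have hK0 : (0:ℝ) ≤ K := Nat.cast_nonneg K
      nlinarith
    calc (T:ℝ) * s ^ K ≤ (Real.exp (η*K) * η / 3) * Real.exp ((K:ℝ) * (-(3*η/2))) := h1
      _ = (η/3) * (Real.exp (η*K) * Real.exp ((K:ℝ) * (-(3*η/2)))) := by ring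
      _ ≤ (η/3) * 1 := mul_le_mul_of_nonneg_left h2 (by positivity)
      _ = η/3 := mul_one _
  rw [ge_iff_le, hPc]
  rw [hs_def] at hext
  linarith
end

section
/- There exists a constant c₁ > 0 such that for all r > 0, all ε with 0 < ε ≤ 1, and all x, y ∈ ℝ² with ‖x − y‖₂ ≥ r√ε, one has |A_ε(x, r) ∩ A_ε(y, r)| ≤ c₁ · |A_ε(0, r)| · √ε. -/
open MeasureTheory

/-- The closed annulus centered at `x` with inner radius `r*(1-ε)` and outer radius `r`. -/
def annulus (x : EuclideanSpace ℝ (Fin 2)) (r ε : ℝ) : Set (EuclideanSpace ℝ (Fin 2)) :=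
  {y | r * (1 - ε) ≤ dist y x ∧ dist y x ≤ r}

open scoped RealInnerProductSpace

namespace AnnulusAux

lemma measurableSet_annulus (x : EuclideanSpace ℝ (Fin 2)) (r ε : ℝ) :
    MeasurableSet (annulus x r ε) := by
  have : IsClosed (annulus x r ε) :=
    (isClosed_le continuous_const (continuous_id.dist continuous_const)).inter
      (isClosed_le (continuous_id.dist continuous_const) continuous_const)
  exact this.measurableSet

lemma annulus_subset_closedBall (x : EuclideanSpace ℝ (Fin 2)) (r ε : ℝ) :
    annulus x r ε ⊆ Metric.closedBall x r := fun _ hz => hz.2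

lemma volume_annulus_ne_top (x : EuclideanSpace ℝ (Fin 2)) (r ε : ℝ) :
    volume (annulus x r ε) ≠ ⊤ :=
  ((measure_mono (annulus_subset_closedBall x r ε)).trans_lt
    measure_closedBall_lt_top).ne

lemma volume_annulus_translate (x : EuclideanSpace ℝ (Fin 2)) (r ε : ℝ) :
    volume (annulus x r ε) = volume (annulus 0 r ε) := by
  have h : annulus x r ε = (· - x) ⁻¹' (annulus 0 r ε) := by
    ext z
    simp only [annulus, Set.mem_setOf_eq, Set.mem_preimage, dist_zero_right, dist_eq_norm,
      sub_zero]
  rw [h]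
  exact (measurePreserving_sub_right volume x).measure_preimage
    (measurableSet_annulus 0 r ε).nullMeasurableSet

lemma volume_annulus0 (r ε : ℝ) (hr : 0 < r) (hε : 0 ≤ ε) (hε1 : ε ≤ 1) :
    (volume (annulus 0 r ε)).toReal = (r^2 - (r*(1-ε))^2) * Real.pi := by
  have h0 : (0:ℝ) ≤ r * (1 - ε) := by nlinarith
  have hle : r * (1 - ε) ≤ r := by nlinarith
  have heq : annulus 0 r ε = Metric.closedBall 0 r \ Metric.ball 0 (r*(1-ε)) := by
    ext z
    simp only [annulus, Set.mem_setOf_eq, Set.mem_diff, Metric.mem_closedBall,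
      Metric.mem_ball, not_lt]
    tauto
  have hsub : Metric.ball (0 : EuclideanSpace ℝ (Fin 2)) (r*(1-ε)) ⊆ Metric.closedBall 0 r :=
    Metric.ball_subset_closedBall.trans (Metric.closedBall_subset_closedBall hle)
  have hBall : volume (Metric.ball (0 : EuclideanSpace ℝ (Fin 2)) (r*(1-ε)))
      = ENNReal.ofReal ((r*(1-ε))^2) * ENNReal.ofReal Real.pi := by
    rw [EuclideanSpace.volume_ball]
    simp only [Fintype.card_fin]
    rw [ENNReal.ofReal_pow h0]
    norm_num
    rw [← ENNReal.ofReal_pow (Real.sqrt_nonneg _), Real.sq_sqrt Real.pi_pos.le]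
  have hCBall : volume (Metric.closedBall (0 : EuclideanSpace ℝ (Fin 2)) r)
      = ENNReal.ofReal (r^2) * ENNReal.ofReal Real.pi := by
    rw [EuclideanSpace.volume_closedBall]
    simp only [Fintype.card_fin]
    rw [ENNReal.ofReal_pow hr.le]
    norm_num
    rw [← ENNReal.ofReal_pow (Real.sqrt_nonneg _), Real.sq_sqrt Real.pi_pos.le]
  rw [heq, measure_diff hsub measurableSet_ball.nullMeasurableSet measure_ball_lt_top.ne]
  rw [ENNReal.toReal_sub_of_le (measure_mono hsub) measure_closedBall_lt_top.ne]
  rw [hBall, hCBall]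
  rw [ENNReal.toReal_mul, ENNReal.toReal_mul, ENNReal.toReal_ofReal (sq_nonneg r),
    ENNReal.toReal_ofReal (sq_nonneg _), ENNReal.toReal_ofReal Real.pi_pos.le]
  ring

lemma volW_le (a b2 ρ ρ' K : ℝ) (hK0 : 0 ≤ K)
    (hK : ∀ u ∈ Set.Icc a b2,
      Real.sqrt (ρ^2 - u^2) - Real.sqrt (max (ρ'^2 - u^2) 0) ≤ K/2) :
    volume {p : ℝ × ℝ | p.1 ∈ Set.Icc a b2 ∧ ρ'^2 ≤ p.1^2 + p.2^2 ∧ p.1^2 + p.2^2 ≤ ρ^2}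
      ≤ ENNReal.ofReal K * ENNReal.ofReal (b2 - a) := by
  set W : Set (ℝ × ℝ) :=
    {p : ℝ × ℝ | p.1 ∈ Set.Icc a b2 ∧ ρ'^2 ≤ p.1^2 + p.2^2 ∧ p.1^2 + p.2^2 ≤ ρ^2} with hW
  have hWm : MeasurableSet W := by
    have h1 : W = (Prod.fst ⁻¹' Set.Icc a b2) ∩
        ((fun p : ℝ × ℝ => p.1^2 + p.2^2) ⁻¹' Set.Icc (ρ'^2) (ρ^2)) := by
      ext p
      simp only [hW, Set.mem_setOf_eq, Set.mem_inter_iff, Set.mem_preimage, Set.mem_Icc]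
    rw [h1]
    exact (measurable_fst measurableSet_Icc).inter
      (((continuous_fst.pow 2).add (continuous_snd.pow 2)).measurable measurableSet_Icc)
  have key : ∀ u : ℝ, volume (Prod.mk u ⁻¹' W)
      ≤ (Set.Icc a b2).indicator (fun _ => ENNReal.ofReal K) u := by
    intro u
    by_cases hu : u ∈ Set.Icc a b2
    · rw [Set.indicator_of_mem hu]
      set f := Real.sqrt (ρ^2 - u^2) with hf
      set g := Real.sqrt (max (ρ'^2 - u^2) 0) with hg
      have hsub : Prod.mk u ⁻¹' W ⊆ Set.Icc g f ∪ Set.Icc (-f) (-g) := by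
        intro v hv
        obtain ⟨-, h1, h2⟩ := hv
        have hvf : |v| ≤ f := by
          rw [← Real.sqrt_sq_eq_abs]
          exact Real.sqrt_le_sqrt (by nlinarith)
        have hvg : g ≤ |v| := by
          rw [← Real.sqrt_sq_eq_abs]
          exact Real.sqrt_le_sqrt (by
            apply max_le (by nlinarith) (sq_nonneg v))
        rcases le_or_gt 0 v with h | h
        · left; rw [abs_of_nonneg h] at hvf hvg; exact ⟨hvg, hvf⟩
        · right; rw [abs_of_neg h] at hvf hvg
          constructor <;> linarith
      calc volume (Prod.mk u ⁻¹' W) ≤ volume (Set.Icc g f ∪ Set.Icc (-f) (-g)) :=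
            measure_mono hsub
        _ ≤ volume (Set.Icc g f) + volume (Set.Icc (-f) (-g)) := measure_union_le _ _
        _ = ENNReal.ofReal (f - g) + ENNReal.ofReal (f - g) := by
            rw [Real.volume_Icc, Real.volume_Icc]; ring_nf
        _ ≤ ENNReal.ofReal (K/2) + ENNReal.ofReal (K/2) := by
            have := hK u hu
            exact add_le_add (ENNReal.ofReal_le_ofReal this) (ENNReal.ofReal_le_ofReal this)
        _ = ENNReal.ofReal K := by
            rw [← ENNReal.ofReal_add (by linarith) (by linarith)]; ring_nf
    · rw [Set.indicator_of_notMem hu]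
      have : Prod.mk u ⁻¹' W = ∅ := by
        ext v; simp only [Set.mem_preimage, Set.mem_empty_iff_false, iff_false]
        intro hv; exact hu hv.1
      simp [this]
  calc volume W = ∫⁻ u, volume (Prod.mk u ⁻¹' W) := by
        rw [Measure.volume_eq_prod, Measure.prod_apply hWm]
    _ ≤ ∫⁻ u, (Set.Icc a b2).indicator (fun _ => ENNReal.ofReal K) u := lintegral_mono key
    _ = ENNReal.ofReal K * volume (Set.Icc a b2) := lintegral_indicator_const measurableSet_Icc _
    _ = ENNReal.ofReal K * ENNReal.ofReal (b2 - a) := by rw [Real.volume_Icc]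

lemma sqrt_bound_near (r ε u : ℝ) (hr : 0 < r) (hε : 0 < ε) (hε1 : ε ≤ 1)
    (hu : |u| ≤ (3/5)*r) :
    Real.sqrt (r^2 - u^2) - Real.sqrt (max ((r*(1-ε))^2 - u^2) 0) ≤ (5*r*ε)/2 := by
  set f := Real.sqrt (r^2 - u^2) with hf
  set g := Real.sqrt (max ((r*(1-ε))^2 - u^2) 0) with hg
  have hu2 : u^2 ≤ (9/25)*r^2 := by nlinarith [abs_nonneg u, sq_abs u]
  have hB0 : 0 ≤ r^2 - u^2 := by nlinarith
  have hf2 : f^2 = r^2 - u^2 := Real.sq_sqrt hB0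
  have hf8 : (4/5)*r ≤ f := by
    rw [hf, show (4/5)*r = Real.sqrt (((4/5)*r)^2) from
      (Real.sqrt_sq (by nlinarith)).symm]
    exact Real.sqrt_le_sqrt (by nlinarith)
  have hg0 : 0 ≤ g := Real.sqrt_nonneg _
  have hg2 : (r*(1-ε))^2 - u^2 ≤ g^2 := by
    rw [hg, Real.sq_sqrt (le_max_right _ _)]; exact le_max_left _ _
  by_cases hfg : f - g ≤ 0
  · nlinarith
  · push_neg at hfg
    have h1 : (f - g) * (f + g) ≤ 2*r^2*ε := by nlinarith [hf2, hg2, sq_nonneg (r*ε)]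
    have h2 : (4/5)*r*(f-g) ≤ (f-g)*(f+g) := by nlinarith
    nlinarith

lemma sqrt_bound_far (r ε u : ℝ) (hr : 0 < r) (hε : 0 < ε) (hε1 : ε ≤ 1) :
    Real.sqrt (r^2 - u^2) - Real.sqrt (max ((r*(1-ε))^2 - u^2) 0) ≤ (3*r*Real.sqrt ε)/2 := by
  have hεsq : Real.sqrt ε ^ 2 = ε := Real.sq_sqrt hε.le
  have hsε : 0 ≤ Real.sqrt ε := Real.sqrt_nonneg ε
  have h32 : 0 ≤ (3*r*Real.sqrt ε)/2 := by
    apply div_nonneg _ (by norm_num)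
    exact mul_nonneg (by linarith) hsε
  rcases le_or_gt (r^2 - u^2) 0 with hB | hB
  · have hfz : Real.sqrt (r^2 - u^2) = 0 := Real.sqrt_eq_zero'.mpr hB
    rw [hfz]
    have := Real.sqrt_nonneg (max ((r*(1-ε))^2 - u^2) 0)
    linarith
  · set C' := max ((r*(1-ε))^2 - u^2) 0 with hC'
    have hC'0 : 0 ≤ C' := le_max_right _ _
    have hC'le : C' ≤ r^2 - u^2 := max_le (by nlinarith [mul_nonneg (mul_nonneg (sq_nonneg r) hε.le) (by linarith : (0:ℝ) ≤ 2-ε)]) hB.le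
    have hBC : r^2 - u^2 - C' ≤ 2*r^2*ε := by
      rcases max_cases ((r*(1-ε))^2 - u^2) 0 with ⟨h1, _⟩ | ⟨h1, h2⟩
      · rw [hC', h1]; nlinarith
      · rw [hC', h1]; nlinarith
    have key : Real.sqrt (r^2 - u^2) ≤ Real.sqrt C' + Real.sqrt (r^2 - u^2 - C') := by
      have e1 : Real.sqrt C' ^ 2 = C' := Real.sq_sqrt hC'0
      have e2 : Real.sqrt (r^2 - u^2 - C') ^ 2 = r^2 - u^2 - C' :=
        Real.sq_sqrt (by linarith)
      have h2 : r^2 - u^2 ≤ (Real.sqrt C' + Real.sqrt (r^2 - u^2 - C'))^2 := by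
        nlinarith [Real.sqrt_nonneg C', Real.sqrt_nonneg (r^2 - u^2 - C'),
          mul_nonneg (Real.sqrt_nonneg C') (Real.sqrt_nonneg (r^2 - u^2 - C'))]
      calc Real.sqrt (r^2 - u^2)
          ≤ Real.sqrt ((Real.sqrt C' + Real.sqrt (r^2 - u^2 - C'))^2) := Real.sqrt_le_sqrt h2
        _ = _ := Real.sqrt_sq (by positivity)
    have h3 : Real.sqrt (r^2 - u^2 - C') ≤ (3*r*Real.sqrt ε)/2 := by
      have h4 : r^2 - u^2 - C' ≤ ((3*r*Real.sqrt ε)/2)^2 := by nlinarith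
      calc Real.sqrt (r^2 - u^2 - C') ≤ Real.sqrt (((3*r*Real.sqrt ε)/2)^2) :=
            Real.sqrt_le_sqrt h4
        _ = _ := Real.sqrt_sq h32
    have hgC : Real.sqrt C' = Real.sqrt (max ((r*(1-ε))^2 - u^2) 0) := by rw [hC']
    linarith [key, h3, hgC ▸ le_refl (Real.sqrt C')]

set_option maxHeartbeats 1000000 in
lemma main_small (r ε : ℝ) (hr : 0 < r) (hε : 0 < ε) (hε2 : ε ≤ 1/100)
    (x y : EuclideanSpace ℝ (Fin 2)) (hxy0 : r * Real.sqrt ε ≤ dist x y) :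
    volume (annulus x r ε ∩ annulus y r ε)
      ≤ ENNReal.ofReal (10 * (r^2 * (ε * Real.sqrt ε))) := by
  obtain ⟨d, hd_def⟩ : ∃ t, t = dist x y := ⟨_, rfl⟩
  have hxy : r * Real.sqrt ε ≤ d := hd_def ▸ hxy0
  have hε1 : ε ≤ 1 := by linarith
  have hsε : 0 < Real.sqrt ε := Real.sqrt_pos.mpr hε
  have hεsq : Real.sqrt ε * Real.sqrt ε = ε := Real.mul_self_sqrt hε.le
  have hsε10 : Real.sqrt ε ≤ 1/10 := by
    have : Real.sqrt ε ≤ Real.sqrt ((1/10)^2) := Real.sqrt_le_sqrt (by nlinarith)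
    rwa [Real.sqrt_sq (by norm_num)] at this
  have hd0 : 0 < d := lt_of_lt_of_le (by positivity) hxy
  -- unit vector
  obtain ⟨e, he_def⟩ : ∃ v : EuclideanSpace ℝ (Fin 2), v = d⁻¹ • (y - x) := ⟨_, rfl⟩
  have hyx : ‖y - x‖ = d := by rw [← dist_eq_norm, dist_comm, ← hd_def]
  have he : ‖e‖ = 1 := by
    rw [he_def, norm_smul, hyx, norm_inv, Real.norm_eq_abs, abs_of_pos hd0,
      inv_mul_cancel₀ hd0.ne']
  -- orthonormal basis with b 0 = e
  have hfr : Module.finrank ℝ (EuclideanSpace ℝ (Fin 2)) = Fintype.card (Fin 2) := by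
    simp [finrank_euclideanSpace]
  have hortho : Orthonormal ℝ (({0} : Set (Fin 2)).restrict fun _ => e) := by
    constructor
    · intro i; exact he
    · intro i j hij
      exact absurd (Subsingleton.elim i j) hij
  obtain ⟨b, hb⟩ := hortho.exists_orthonormalBasis_extension_of_card_eq hfr
  have hb0 : b 0 = e := hb 0 rfl
  -- measure preserving map
  have hψmp : MeasurePreserving
      (fun z : EuclideanSpace ℝ (Fin 2) => (b.repr (z - x) 0, b.repr (z - x) 1))
      volume volume :=
    (volume_preserving_finTwoArrow ℝ).comp
      ((EuclideanSpace.volume_preserving_symm_measurableEquiv_toLp (Fin 2)).comp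
        ((b.measurePreserving_repr).comp (measurePreserving_sub_right volume x)))
  -- constants
  obtain ⟨M, hM_def⟩ : ∃ t : ℝ, t = r^2 - (r*(1-ε))^2 := ⟨_, rfl⟩
  have hM0 : 0 ≤ M := by
    rw [hM_def]
    nlinarith [mul_nonneg (mul_nonneg (sq_nonneg r) hε.le) (by linarith : (0:ℝ) ≤ 2-ε)]
  have hMle : M ≤ 2*r^2*ε := by
    rw [hM_def]
    nlinarith [mul_nonneg (mul_nonneg (sq_nonneg r) hε.le) hε.le]
  obtain ⟨A, hA_def⟩ : ∃ t : ℝ, t = (d^2 - M)/(2*d) := ⟨_, rfl⟩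
  obtain ⟨B2, hB2_def⟩ : ∃ t : ℝ, t = (d^2 + M)/(2*d) := ⟨_, rfl⟩
  have hba : B2 - A = M/d := by
    rw [hB2_def, hA_def, div_sub_div_same]
    have h2 : d^2 + M - (d^2 - M) = 2*M := by ring
    rw [h2, mul_div_mul_left _ _ (by norm_num : (2:ℝ) ≠ 0)]
  obtain ⟨W, hW_def⟩ : ∃ W : Set (ℝ × ℝ), W =
      {p : ℝ × ℝ | p.1 ∈ Set.Icc A B2 ∧ (r*(1-ε))^2 ≤ p.1^2 + p.2^2 ∧ p.1^2 + p.2^2 ≤ r^2} :=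
    ⟨_, rfl⟩
  -- inclusion
  have hincl : annulus x r ε ∩ annulus y r ε ⊆
      (fun z : EuclideanSpace ℝ (Fin 2) => (b.repr (z - x) 0, b.repr (z - x) 1)) ⁻¹' W := by
    rintro z ⟨⟨hzx1, hzx2⟩, hzy1, hzy2⟩
    rw [dist_eq_norm] at hzx1 hzx2 hzy1 hzy2
    have hr1e : 0 ≤ r * (1-ε) := by nlinarith
    have n1 : (r*(1-ε))^2 ≤ ‖z - x‖^2 := pow_le_pow_left₀ hr1e hzx1 2
    have n2 : ‖z - x‖^2 ≤ r^2 := pow_le_pow_left₀ (norm_nonneg _) hzx2 2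
    have n3 : (r*(1-ε))^2 ≤ ‖z - y‖^2 := pow_le_pow_left₀ hr1e hzy1 2
    have n4 : ‖z - y‖^2 ≤ r^2 := pow_le_pow_left₀ (norm_nonneg _) hzy2 2
    have hyx2 : y - x = d • e := by
      rw [he_def, smul_smul, mul_inv_cancel₀ hd0.ne', one_smul]
    have hw' : z - y = (z - x) - (y - x) := by abel
    have hexp : ‖z - y‖^2 = ‖z - x‖^2 - 2*(d * ⟪e, z - x⟫) + d^2 := by
      rw [hw', @norm_sub_sq_real, hyx2, real_inner_smul_right, norm_smul,
        Real.norm_eq_abs, abs_of_pos hd0, he, real_inner_comm]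
      ring
    have hco0 : b.repr (z - x) 0 = ⟪e, z - x⟫ := by
      rw [b.repr_apply_apply, hb0]
    have hAle : A ≤ ⟪e, z - x⟫ := by
      rw [hA_def, div_le_iff₀ (by positivity)]
      nlinarith
    have hleB : ⟪e, z - x⟫ ≤ B2 := by
      rw [hB2_def, le_div_iff₀ (by positivity)]
      nlinarith
    have hnorm : (b.repr (z - x) 0)^2 + (b.repr (z - x) 1)^2 = ‖z - x‖^2 := by
      have h1 : ‖b.repr (z - x)‖ = ‖z - x‖ := b.repr.norm_map (z - x)
      have h2 : ‖b.repr (z - x)‖^2 = ∑ i : Fin 2, ‖b.repr (z - x) i‖^2 := by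
        rw [EuclideanSpace.norm_eq, Real.sq_sqrt (by positivity)]
      rw [← h1, h2, Fin.sum_univ_two, Real.norm_eq_abs, Real.norm_eq_abs, sq_abs, sq_abs]
    simp only [Set.mem_preimage, hW_def, Set.mem_setOf_eq, Set.mem_Icc]
    refine ⟨⟨?_, ?_⟩, ?_, ?_⟩
    · rw [hco0]; exact hAle
    · rw [hco0]; exact hleB
    · rw [hnorm]; exact n1
    · rw [hnorm]; exact n2
  have hWm : MeasurableSet W := by
    have h1 : W = (Prod.fst ⁻¹' Set.Icc A B2) ∩
        ((fun p : ℝ × ℝ => p.1^2 + p.2^2) ⁻¹' Set.Icc ((r*(1-ε))^2) (r^2)) := by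
      rw [hW_def]
      ext p
      simp only [Set.mem_setOf_eq, Set.mem_inter_iff, Set.mem_preimage, Set.mem_Icc]
    rw [h1]
    exact (measurable_fst measurableSet_Icc).inter
      (((continuous_fst.pow 2).add (continuous_snd.pow 2)).measurable measurableSet_Icc)
  have step1 : volume (annulus x r ε ∩ annulus y r ε) ≤ volume W :=
    (measure_mono hincl).trans_eq (hψmp.measure_preimage hWm.nullMeasurableSet)
  -- case split
  rcases le_or_gt d r with hdr | hdr
  · -- d ≤ r : use K = 5 r ε
    have hKpt : ∀ u ∈ Set.Icc A B2,
        Real.sqrt (r^2 - u^2) - Real.sqrt (max ((r*(1-ε))^2 - u^2) 0) ≤ (5*r*ε)/2 := by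
      intro u hu
      have hub : u ≤ B2 := hu.2
      have hua : A ≤ u := hu.1
      have hB2le : B2 ≤ (3/5)*r := by
        rw [hB2_def, div_le_iff₀ (by positivity)]
        nlinarith [mul_le_mul_of_nonneg_right hxy hd0.le,
          mul_le_mul_of_nonneg_left hsε10 (mul_nonneg hd0.le hr.le),
          mul_le_mul_of_nonneg_right hxy (mul_nonneg hr.le hsε.le)]
      have hAge : -((3/5)*r) ≤ A := by
        rw [hA_def, le_div_iff₀ (by positivity)]
        nlinarith [mul_le_mul_of_nonneg_right hxy hd0.le,
          mul_le_mul_of_nonneg_left hsε10 (mul_nonneg hd0.le hr.le),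
          mul_le_mul_of_nonneg_right hxy (mul_nonneg hr.le hsε.le)]
      have huabs : |u| ≤ (3/5)*r := abs_le.mpr ⟨by linarith, by linarith⟩
      exact sqrt_bound_near r ε u hr hε hε1 huabs
    have step2 := volW_le A B2 r (r*(1-ε)) (5*r*ε)
      (by positivity) hKpt
    rw [← hW_def] at step2
    refine step1.trans (step2.trans ?_)
    rw [hba, ← ENNReal.ofReal_mul (by positivity)]
    apply ENNReal.ofReal_le_ofReal
    have hMd : M/d ≤ 2*r*Real.sqrt ε := by
      rw [div_le_iff₀ hd0]
      nlinarith [mul_le_mul_of_nonneg_right hxy (mul_nonneg hr.le hsε.le)]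
    calc 5*r*ε * (M/d) ≤ 5*r*ε * (2*r*Real.sqrt ε) := by
          apply mul_le_mul_of_nonneg_left hMd (by positivity)
      _ = 10 * (r^2 * (ε * Real.sqrt ε)) := by ring
  · -- r < d : use K = 3 r √ε
    have hKpt : ∀ u ∈ Set.Icc A B2,
        Real.sqrt (r^2 - u^2) - Real.sqrt (max ((r*(1-ε))^2 - u^2) 0)
          ≤ (3*r*Real.sqrt ε)/2 :=
      fun u _ => sqrt_bound_far r ε u hr hε hε1
    have step2 := volW_le A B2 r (r*(1-ε)) (3*r*Real.sqrt ε)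
      (by positivity) hKpt
    rw [← hW_def] at step2
    refine step1.trans (step2.trans ?_)
    rw [hba, ← ENNReal.ofReal_mul (by positivity)]
    apply ENNReal.ofReal_le_ofReal
    have hMd : M/d ≤ 2*r*ε := by
      rw [div_le_iff₀ hd0]
      nlinarith [mul_pos hr hε]
    calc 3*r*Real.sqrt ε * (M/d) ≤ 3*r*Real.sqrt ε * (2*r*ε) := by
          apply mul_le_mul_of_nonneg_left hMd (by positivity)
      _ = 6 * (r^2 * (ε * Real.sqrt ε)) := by ring
      _ ≤ 10 * (r^2 * (ε * Real.sqrt ε)) := by nlinarith [sq_nonneg r, mul_nonneg (mul_nonneg (sq_nonneg r) hε.le) hsε.le]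

end AnnulusAux

theorem annulus_inter_measure_upper_bound :
    ∃ c₁ : ℝ, 0 < c₁ ∧
      ∀ (r ε : ℝ), 0 < r → 0 < ε → ε ≤ 1 →
      ∀ (x y : EuclideanSpace ℝ (Fin 2)), r * Real.sqrt ε ≤ dist x y →
        (volume (annulus x r ε ∩ annulus y r ε)).toReal ≤
          c₁ * (volume (annulus 0 r ε)).toReal * Real.sqrt ε := by
  refine ⟨10, by norm_num, ?_⟩
  intro r ε hr hε hε1 x y hxy
  have hsε : 0 < Real.sqrt ε := Real.sqrt_pos.mpr hε
  have hV : (volume (annulus 0 r ε)).toReal = (r^2 - (r*(1-ε))^2) * Real.pi :=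
    AnnulusAux.volume_annulus0 r ε hr hε.le hε1
  have hVlb : r^2*ε ≤ (volume (annulus 0 r ε)).toReal := by
    rw [hV]
    nlinarith [Real.pi_gt_three, sq_nonneg r, mul_nonneg (mul_nonneg (sq_nonneg r) hε.le) hε.le,
      mul_nonneg (mul_nonneg (mul_nonneg (sq_nonneg r) hε.le) hε.le) Real.pi_pos.le,
      mul_nonneg (mul_nonneg (sq_nonneg r) hε.le) (by linarith : (0:ℝ) ≤ 2 - ε)]
  rcases le_or_gt ε (1/100) with hc | hc
  · have h1 := AnnulusAux.main_small r ε hr hε hc x y hxy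
    have h2 : (volume (annulus x r ε ∩ annulus y r ε)).toReal ≤ 10*(r^2*(ε*Real.sqrt ε)) :=
      ENNReal.toReal_le_of_le_ofReal (by positivity) h1
    calc (volume (annulus x r ε ∩ annulus y r ε)).toReal ≤ 10*(r^2*(ε*Real.sqrt ε)) := h2
      _ = 10*(r^2*ε)*Real.sqrt ε := by ring
      _ ≤ 10 * (volume (annulus 0 r ε)).toReal * Real.sqrt ε := by
          apply mul_le_mul_of_nonneg_right _ hsε.le
          linarith
  · have h10 : 1/10 ≤ Real.sqrt ε := by
      have : Real.sqrt ((1/10)^2) ≤ Real.sqrt ε := Real.sqrt_le_sqrt (by norm_num; linarith)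
      rwa [Real.sqrt_sq (by norm_num)] at this
    have hmono : volume (annulus x r ε ∩ annulus y r ε) ≤ volume (annulus 0 r ε) := by
      calc volume (annulus x r ε ∩ annulus y r ε) ≤ volume (annulus x r ε) :=
            measure_mono Set.inter_subset_left
        _ = volume (annulus 0 r ε) := AnnulusAux.volume_annulus_translate x r ε
    have h2 : (volume (annulus x r ε ∩ annulus y r ε)).toReal
        ≤ (volume (annulus 0 r ε)).toReal :=
      ENNReal.toReal_mono (AnnulusAux.volume_annulus_ne_top 0 r ε) hmono
    have h3 : 0 ≤ (volume (annulus 0 r ε)).toReal := ENNReal.toReal_nonneg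
    nlinarith [mul_le_mul_of_nonneg_left h10 (by linarith : (0:ℝ) ≤ 10 * (volume (annulus 0 r ε)).toReal)]
end

section
/- There exists a constant c > 0 such that for all r > 0, all ε with 0 < ε ≤ 1, and all x, y ∈ ℝ², the Lebesgue measure of the intersection of the annulus A_ε(x, r) with the closed Euclidean ball of radius r√ε centered at y satisfies |A_ε(x, r) ∩ B̄(y, r√ε)| ≤ c · r² · ε^{3/2}. -/
set_option maxHeartbeats 1000000

open MeasureTheory

private lemma aux_sqrt_third {ε : ℝ} (hε : 0 < ε) (hεs : ε < 1/9) : Real.sqrt ε ≤ 1/3 := by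
  rw [show (1:ℝ)/3 = Real.sqrt ((1/3)^2) by rw [Real.sqrt_sq (by norm_num)]]
  exact Real.sqrt_le_sqrt (by nlinarith)

private lemma aux_dpos {r ε w d : ℝ} (hr : 0 < r) (hε : 0 < ε) (hεs : ε < 1/9)
    (hw3 : w ≤ r/3) (hd_lb : r * (1-ε) - w ≤ d) : 0 < d := by nlinarith

private lemma aux_sp {r ε w d ip : ℝ} (hr : 0 < r) (hε : 0 < ε) (hεs : ε < 1/9)
    (hw3 : w ≤ r/3) (hlow : -w ≤ ip) (hd_lb : r * (1-ε) - w ≤ d) : 0 ≤ ip + d := by nlinarith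

private lemma aux_a_le_r {r ε : ℝ} (hr : 0 < r) (hε : 0 < ε) (hεs : ε < 1/9) :
    r * Real.sqrt ((1-ε)^2 - ε) ≤ r := by
  have h1 : Real.sqrt ((1-ε)^2 - ε) ≤ 1 := by
    have := Real.sqrt_le_sqrt (show (1-ε)^2 - ε ≤ 1 by nlinarith)
    rwa [Real.sqrt_one] at this
  nlinarith

private lemma aux_hra {r ε : ℝ} (hr : 0 < r) (hε : 0 < ε) (hεs : ε < 1/9) :
    r - r * Real.sqrt ((1-ε)^2 - ε) ≤ 3*r*ε := by
  have hx0 : (0:ℝ) ≤ 1 - 3*ε + ε^2 := by nlinarith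
  have hsq := Real.sqrt_le_sqrt (show (1-3*ε+ε^2)^2 ≤ (1-ε)^2 - ε by
    nlinarith [mul_nonneg hx0 (show (0:ℝ) ≤ 1-(1-3*ε+ε^2) by nlinarith)])
  rw [Real.sqrt_sq hx0] at hsq
  nlinarith

private lemma aux_final {r ε : ℝ} (hr : 0 < r) (hε : 0 < ε) (hεs : ε < 1/9) :
    (r - r * Real.sqrt ((1-ε)^2 - ε)) * (r * Real.sqrt ε - -(r * Real.sqrt ε)) ≤
      3*r*ε * (2*(r*Real.sqrt ε)) := by
  have h1 := aux_hra hr hε hεs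
  have h2 : (0:ℝ) ≤ r * Real.sqrt ε := by positivity
  have h3 := aux_a_le_r hr hε hεs
  nlinarith

private lemma aux_s_lb {r ε s t n : ℝ} (hr : 0 < r) (hε : 0 < ε) (hεs : ε < 1/9)
    (hpar : n^2 = s^2 + t^2) (hpxl : r*(1-ε) ≤ n)
    (ht : |t| ≤ r * Real.sqrt ε) (hs0 : 0 ≤ s) :
    r * Real.sqrt ((1-ε)^2 - ε) ≤ s := by
  have hg : (0:ℝ) ≤ (1-ε)^2 - ε := by nlinarith
  have ht2 : t^2 ≤ r^2 * ε := by
    have h := abs_le.mp ht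
    have hsε : (Real.sqrt ε)^2 = ε := Real.sq_sqrt hε.le
    nlinarith [h.1, h.2, Real.sqrt_nonneg ε, hr]
  have hs2 : r^2*((1-ε)^2-ε) ≤ s^2 := by
    nlinarith [hpar, ht2, mul_self_le_mul_self (show (0:ℝ) ≤ r*(1-ε) by nlinarith) hpxl]
  have h1 : r*Real.sqrt ((1-ε)^2-ε) = Real.sqrt (r^2*((1-ε)^2-ε)) := by
    rw [Real.sqrt_mul (by positivity), Real.sqrt_sq hr.le]
  rw [h1, show s = Real.sqrt (s^2) by rw [Real.sqrt_sq hs0]]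
  exact Real.sqrt_le_sqrt hs2

private lemma annulus_inter_key (r ε : ℝ) (hr : 0 < r) (hε : 0 < ε) (hεs : ε < 1/9)
    (x y : EuclideanSpace ℝ (Fin 2)) (p₀ : EuclideanSpace ℝ (Fin 2))
    (hp₀ : p₀ ∈ annulus x r ε ∩ Metric.closedBall y (r * Real.sqrt ε)) :
    volume (annulus x r ε ∩ Metric.closedBall y (r * Real.sqrt ε))
      ≤ ENNReal.ofReal ((3*r*ε) * (2*(r*Real.sqrt ε))) := by
  set w : ℝ := r * Real.sqrt ε with hwdef
  have hsε : Real.sqrt ε ≤ 1/3 := aux_sqrt_third hε hεs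
  have hw0 : 0 ≤ w := by positivity
  have hw3 : w ≤ r/3 := by
    rw [hwdef]
    calc r * Real.sqrt ε ≤ r * (1/3) := by
          exact mul_le_mul_of_nonneg_left hsε hr.le
      _ = r/3 := by ring
  set d : ℝ := dist y x with hd
  have hd_lb : r * (1 - ε) - w ≤ d := by
    have hpann : r * (1-ε) ≤ dist p₀ x ∧ dist p₀ x ≤ r := hp₀.1
    have h2 : dist p₀ y ≤ w := hp₀.2
    have hc : dist p₀ x ≤ dist p₀ y + d := by rw [hd]; exact dist_triangle p₀ y x
    linarith [hpann.1]
  have hd_pos : 0 < d := aux_dpos hr hε hεs hw3 hd_lb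
  set u : EuclideanSpace ℝ (Fin 2) := d⁻¹ • (y - x) with hu_def
  have hyx : ‖y - x‖ = d := by rw [hd, dist_eq_norm]
  have hu : ‖u‖ = 1 := by
    rw [hu_def, norm_smul, hyx, norm_inv, Real.norm_eq_abs, abs_of_pos hd_pos,
      inv_mul_cancel₀ hd_pos.ne']
  set v : EuclideanSpace ℝ (Fin 2) := (WithLp.equiv 2 (Fin 2 → ℝ)).symm ![-(u 1), u 0] with hv
  have h0 : v 0 = -(u 1) := rfl
  have h1 : v 1 = u 0 := rfl
  have huv : inner ℝ u v = (0:ℝ) := by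
    simp [PiLp.inner_apply, Fin.sum_univ_two, h0, h1]; ring
  have hnu : ‖u‖^2 = (u 0)^2 + (u 1)^2 := by
    rw [EuclideanSpace.norm_eq, Real.sq_sqrt (by positivity)]
    simp [Fin.sum_univ_two, sq_abs]
  have hnv : ‖v‖ = 1 := by
    rw [← Real.sqrt_one, EuclideanSpace.norm_eq]
    congr 1
    simp only [Fin.sum_univ_two, h0, h1, Real.norm_eq_abs, sq_abs]
    have hsum : u 0 ^ 2 + u 1 ^ 2 = 1 := by rw [← hnu, hu]; norm_num
    linarith [hsum]
  have hvu : inner ℝ v u = (0:ℝ) := by rw [real_inner_comm]; exact huv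
  have hsum : u 0 ^ 2 + u 1 ^ 2 = 1 := by rw [← hnu, hu]; norm_num
  have hnu2 : u 0 * u 0 + u 1 * u 1 = 1 := by linear_combination hsum
  have hnv2 : v 0 * v 0 + v 1 * v 1 = 1 := by rw [h0, h1]; linear_combination hsum
  have hON : Orthonormal ℝ ![u, v] := by
    rw [orthonormal_iff_ite]
    intro i j
    fin_cases i <;> fin_cases j <;>
      simp [real_inner_self_eq_norm_sq, hu, hnv, huv, hvu, hnu2, hnv2]
  have hcard : Fintype.card (Fin 2) = Module.finrank ℝ (EuclideanSpace ℝ (Fin 2)) := by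
    simp [finrank_euclideanSpace_fin]
  set B : Module.Basis (Fin 2) ℝ (EuclideanSpace ℝ (Fin 2)) :=
    basisOfLinearIndependentOfCardEqFinrank hON.linearIndependent hcard with hB
  have hBcoe : ⇑B = ![u, v] := coe_basisOfLinearIndependentOfCardEqFinrank _ _
  have hBON : Orthonormal ℝ B := by rw [hBcoe]; exact hON
  set b : OrthonormalBasis (Fin 2) ℝ (EuclideanSpace ℝ (Fin 2)) := B.toOrthonormalBasis hBON
    with hb
  have hb0 : b 0 = u := by
    rw [hb, Module.Basis.coe_toOrthonormalBasis, hBcoe]; rfl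
  have hb1 : b 1 = v := by
    rw [hb, Module.Basis.coe_toOrthonormalBasis, hBcoe]; rfl
  set a : ℝ := r * Real.sqrt ((1-ε)^2 - ε) with ha
  have ha0 : 0 ≤ a := by positivity
  have ha_le_r : a ≤ r := by rw [ha]; exact aux_a_le_r hr hε hεs
  set Q : Set (EuclideanSpace ℝ (Fin 2)) :=
    (MeasurableEquiv.toLp 2 (Fin 2 → ℝ)).symm ⁻¹' (Set.univ.pi ![Set.Icc a r, Set.Icc (-w) w])
    with hQ
  have hpiMeas : MeasurableSet (Set.univ.pi ![Set.Icc a r, Set.Icc (-w) w]) :=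
    MeasurableSet.univ_pi fun i => by fin_cases i <;> exact measurableSet_Icc
  have hQmeas : MeasurableSet Q :=
    (MeasurableEquiv.toLp 2 (Fin 2 → ℝ)).symm.measurable hpiMeas
  have hQmem : ∀ q : EuclideanSpace ℝ (Fin 2),
      q ∈ Q ↔ (a ≤ q 0 ∧ q 0 ≤ r) ∧ (-w ≤ q 1 ∧ q 1 ≤ w) := by
    intro q
    rw [hQ]
    simp [MeasurableEquiv.coe_toLp_symm, Set.mem_pi, Fin.forall_fin_two]
  have hsub : annulus x r ε ∩ Metric.closedBall y w ⊆
      (fun p => p + (-x)) ⁻¹' (⇑b.repr ⁻¹' Q) := by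
    rintro p ⟨hpann, hpy⟩
    obtain ⟨hpl, hpr⟩ : r * (1-ε) ≤ dist p x ∧ dist p x ≤ r := hpann
    simp only [Set.mem_preimage]
    rw [hQmem]
    have hpx : ‖p - x‖ ≤ r := by rwa [← dist_eq_norm]
    have hpxl : r * (1-ε) ≤ ‖p - x‖ := by rwa [← dist_eq_norm]
    have hpyn : ‖p - y‖ ≤ w := by rwa [← dist_eq_norm]
    set s : ℝ := inner ℝ u (p - x) with hs
    set t : ℝ := inner ℝ v (p - x) with ht
    have hrepr0 : b.repr (p + -x) 0 = s := by
      rw [b.repr_apply_apply, hb0, ← sub_eq_add_neg]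
    have hrepr1 : b.repr (p + -x) 1 = t := by
      rw [b.repr_apply_apply, hb1, ← sub_eq_add_neg]
    have hyxu : y - x = d • u := by
      rw [hu_def, smul_smul, mul_inv_cancel₀ hd_pos.ne', one_smul]
    have hsplit : (p - x) = (p - y) + d • u := by rw [← hyxu]; abel
    have htb : |t| ≤ w := by
      have he : t = inner ℝ v (p - y) := by
        rw [ht, hsplit, inner_add_right, real_inner_smul_right, hvu]; ring
      rw [he]
      calc |(inner ℝ v (p - y) : ℝ)| ≤ ‖v‖ * ‖p - y‖ := abs_real_inner_le_norm v (p - y)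
        _ ≤ w := by rw [hnv, one_mul]; exact hpyn
    have hsu : s ≤ r := by
      calc s ≤ |(inner ℝ u (p-x) : ℝ)| := le_abs_self _
        _ ≤ ‖u‖ * ‖p - x‖ := abs_real_inner_le_norm _ _
        _ ≤ r := by rw [hu, one_mul]; exact hpx
    have hsp : 0 ≤ s := by
      have hseq : s = inner ℝ u (p - y) + d := by
        rw [hs, hsplit, inner_add_right, real_inner_smul_right, real_inner_self_eq_norm_sq, hu]
        ring
      have habs : |(inner ℝ u (p - y) : ℝ)| ≤ w := by
        have h := abs_real_inner_le_norm u (p - y)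
        rw [hu, one_mul] at h
        exact le_trans h hpyn
      rw [hseq]
      exact aux_sp hr hε hεs hw3 (abs_le.mp habs).1 hd_lb
    have hpar : ‖p - x‖^2 = s^2 + t^2 := by
      have hnr : ‖b.repr (p + -x)‖ = ‖p + -x‖ := b.repr.norm_map _
      have h2 : ‖b.repr (p + -x)‖^2 = s^2 + t^2 := by
        rw [EuclideanSpace.norm_eq, Real.sq_sqrt (by positivity), Fin.sum_univ_two,
          hrepr0, hrepr1]
        simp [sq_abs]
      rw [← sub_eq_add_neg] at hnr h2
      rw [← hnr]; exact h2
    have htb2 := abs_le.mp htb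
    have hsl : a ≤ s := by
      rw [ha]
      exact aux_s_lb hr hε hεs hpar hpxl (by rw [← hwdef]; exact htb) hsp
    exact ⟨⟨by rw [hrepr0]; exact hsl, by rw [hrepr0]; exact hsu⟩,
      by rw [hrepr1]; exact htb2.1, by rw [hrepr1]; exact htb2.2⟩
  calc volume (annulus x r ε ∩ Metric.closedBall y w)
      ≤ volume ((fun p => p + (-x)) ⁻¹' (⇑b.repr ⁻¹' Q)) := measure_mono hsub
    _ = volume (⇑b.repr ⁻¹' Q) := measure_preimage_add_right volume (-x) _
    _ = volume Q := b.measurePreserving_repr.measure_preimage hQmeas.nullMeasurableSet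
    _ = volume (Set.univ.pi ![Set.Icc a r, Set.Icc (-w) w]) := by
        rw [hQ]
        exact (EuclideanSpace.volume_preserving_symm_measurableEquiv_toLp (Fin 2)).measure_preimage
          hpiMeas.nullMeasurableSet
    _ = ENNReal.ofReal (r - a) * ENNReal.ofReal (w - -w) := by
        rw [volume_pi_pi, Fin.prod_univ_two]
        simp [Real.volume_Icc]
    _ ≤ ENNReal.ofReal ((3*r*ε) * (2*(r*Real.sqrt ε))) := by
        rw [← ENNReal.ofReal_mul (by linarith)]
        apply ENNReal.ofReal_le_ofReal
        rw [ha, hwdef]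
        exact aux_final hr hε hεs

theorem annulus_inter_ball_measure_upper_bound :
    ∃ c : ℝ, 0 < c ∧
      ∀ (r ε : ℝ), 0 < r → 0 < ε → ε ≤ 1 →
      ∀ (x y : EuclideanSpace ℝ (Fin 2)),
        (volume (annulus x r ε ∩ Metric.closedBall y (r * Real.sqrt ε))).toReal ≤
          c * r ^ 2 * ε ^ ((3 : ℝ) / 2) := by
  refine ⟨100, by norm_num, fun r ε hr hε hε1 x y => ?_⟩
  have hb0 : (0:ℝ) ≤ 100 * r^2 * ε^((3:ℝ)/2) := by positivity
  apply ENNReal.toReal_le_of_le_ofReal hb0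
  have hεr : ε^((3:ℝ)/2) = ε * Real.sqrt ε := by
    rw [show (3:ℝ)/2 = 1 + 1/2 by norm_num, Real.rpow_add hε, Real.rpow_one,
      ← Real.sqrt_eq_rpow]
  by_cases hcase : ε < 1/9
  · rcases Set.eq_empty_or_nonempty (annulus x r ε ∩ Metric.closedBall y (r * Real.sqrt ε)) with
      hemp | ⟨p₀, hp₀⟩
    · rw [hemp, measure_empty]
      exact zero_le
    · refine le_trans (annulus_inter_key r ε hr hε hcase x y p₀ hp₀) ?_
      apply ENNReal.ofReal_le_ofReal
      rw [hεr]
      nlinarith [Real.sqrt_nonneg ε, hr, hε]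
  · push_neg at hcase
    have hsε : (1:ℝ)/3 ≤ Real.sqrt ε := by
      rw [show (1:ℝ)/3 = Real.sqrt ((1/3)^2) by rw [Real.sqrt_sq (by norm_num)]]
      exact Real.sqrt_le_sqrt (by nlinarith)
    calc volume (annulus x r ε ∩ Metric.closedBall y (r * Real.sqrt ε))
        ≤ volume (Metric.closedBall y (r * Real.sqrt ε)) :=
          measure_mono Set.inter_subset_right
      _ = ENNReal.ofReal (r * Real.sqrt ε) ^ Fintype.card (Fin 2) *
            ENNReal.ofReal (Real.sqrt Real.pi ^ Fintype.card (Fin 2) /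
              Real.Gamma (Fintype.card (Fin 2) / 2 + 1)) :=
          EuclideanSpace.volume_closedBall (Fin 2) y (r * Real.sqrt ε)
      _ ≤ ENNReal.ofReal (100 * r^2 * ε^((3:ℝ)/2)) := by
          have hcard : (Fintype.card (Fin 2)) = 2 := by simp
          rw [hcard]
          have hg : Real.Gamma (((2:ℕ):ℝ) / 2 + 1) = 1 := by
            norm_num [Real.Gamma_two]
          rw [hg]
          have hπ : Real.sqrt Real.pi ^ 2 / 1 = Real.pi := by
            rw [div_one, Real.sq_sqrt Real.pi_nonneg]
          rw [hπ]
          rw [← ENNReal.ofReal_pow (by positivity), ← ENNReal.ofReal_mul (by positivity)]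
          apply ENNReal.ofReal_le_ofReal
          have hε2 : (Real.sqrt ε)^2 = ε := Real.sq_sqrt hε.le
          rw [hεr]
          have he : (r * Real.sqrt ε)^2 = r^2 * ε := by
            rw [mul_pow, hε2]
          rw [he]
          have h4 : r^2*ε*Real.pi ≤ r^2*ε*4 :=
            mul_le_mul_of_nonneg_left Real.pi_le_four (by positivity)
          have h5 : (100*(r^2*ε))*(1/3) ≤ (100*(r^2*ε))*Real.sqrt ε :=
            mul_le_mul_of_nonneg_left hsε (by positivity)
          nlinarith [h4, h5]
end
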